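/- arXiv:2406.14968 — 2 statements merged into one kernel-verified Lean document; each statement's English description precedes it below -/
import Mathlib

section
/- Lemma (Λ-link isolation for s^4). Let d ≥ 9, let s^4 be the syndrome of the error ε^4 on the toric lattice T_d, and let T_{i,q} be a decoding tree where the qubit q is incident to an unsatisfied check c of s^4. If u — v is a Λ-link in T_{i,q} and S is the smallest subtree of T_{i,q} containing it, then every vertex w of T_{i,q} not in S that is associated with an unsatisfied check satisfies d(u,w) = d(v,w) ≥ 6, where d denotes path length in the tree. -/
namespace ToricMS

/-- Checks of the toric lattice: vertices of the `d × d` torus grid. -/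
abbrev V (d : ℕ) : Type := ZMod d × ZMod d

/-- The toric lattice `T_d`: two checks are adjacent iff their difference is
`(±1, 0)` or `(0, ±1)` mod `d` (for `d ≥ 3` the inequality clause is automatic). -/
def Toric (d : ℕ) : SimpleGraph (V d) where
  Adj v w := v ≠ w ∧
    (v - w = (1, 0) ∨ v - w = (-1, 0) ∨ v - w = (0, 1) ∨ v - w = (0, -1))
  symm := by
    constructor
    rintro v w ⟨hne, h⟩
    refine ⟨hne.symm, ?_⟩
    have hswap : w - v = -(v - w) := by ring
    rcases h with h | h | h | h <;> rw [hswap, h] <;> simp [Prod.ext_iff]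
  loopless := ⟨fun v h => h.1 rfl⟩

/-- Weight of an error: the number of qubits (edges) in error. -/
noncomputable def wt {d : ℕ} (e : (Toric d).edgeSet → ZMod 2) : ℕ :=
  Nat.card {q : (Toric d).edgeSet // e q = 1}

/-- Syndrome of an error: mod-2 sum of the error over the qubits incident to each check. -/
noncomputable def synd {d : ℕ} (e : (Toric d).edgeSet → ZMod 2) : V d → ZMod 2 :=
  fun c => (Nat.card {q : (Toric d).edgeSet // e q = 1 ∧ c ∈ (q : Sym2 (V d))} : ZMod 2)

/-- A degenerate error: some different error of no larger weight has the same syndrome. -/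
def Degenerate {d : ℕ} (e : (Toric d).edgeSet → ZMod 2) : Prop :=
  ∃ e' : (Toric d).edgeSet → ZMod 2, e' ≠ e ∧ wt e' ≤ wt e ∧ synd e' = synd e

/-- The fake syndrome `s^c` having `c` as its only unsatisfied check. -/
def fakeS (d : ℕ) (c : V d) : V d → ZMod 2 := fun c' => if c' = c then 1 else 0

/-- The error `ε⁴` consisting of 4 consecutive collinear (horizontal) qubits. -/
def eps4 (d : ℕ) : (Toric d).edgeSet → ZMod 2 := fun q =>
  if q.val = s((((0 : ZMod d), (0 : ZMod d)) : V d), ((1, 0) : V d))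
      ∨ q.val = s((((1 : ZMod d), (0 : ZMod d)) : V d), ((2, 0) : V d))
      ∨ q.val = s((((2 : ZMod d), (0 : ZMod d)) : V d), ((3, 0) : V d))
      ∨ q.val = s((((3 : ZMod d), (0 : ZMod d)) : V d), ((4, 0) : V d))
  then 1 else 0

/-- Walk without return (wwr) in `T_d`, as its list of visited checks. -/
def IsWWR (d : ℕ) (l : List (V d)) : Prop :=
  l.Chain' (Toric d).Adj ∧ ∀ j : ℕ, j + 2 < l.length → l[j]? ≠ l[j + 2]?

/-- A walk starting with the root edge `e_q = {a, b}` (either orientation allowed). -/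
def StartsQ (d : ℕ) (a b : V d) (l : List (V d)) : Prop :=
  l.take 2 = [a, b] ∨ l.take 2 = [b, a]

/-- Vertices of the decoding tree `T_{i,q}` (`q` the edge `{a,b}`): wwrs of
length `1, …, i` starting with `e_q`, encoded by their check lists. -/
def IsTreeVertex (d : ℕ) (a b : V d) (i : ℕ) (l : List (V d)) : Prop :=
  IsWWR d l ∧ StartsQ d a b l ∧ 2 ≤ l.length ∧ l.length ≤ i + 1

/-- Edges of the decoding tree `T_{i,q}`: wwrs of length `1, …, i+1` starting with
`e_q` (an edge is identified with the wwr ending with it), where the root edge is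
canonically represented by `[a, b]`. -/
def IsTreeEdge (d : ℕ) (a b : V d) (i : ℕ) (l : List (V d)) : Prop :=
  IsWWR d l ∧ StartsQ d a b l ∧ 2 ≤ l.length ∧ l.length ≤ i + 2 ∧
    (l.length = 2 → l = [a, b])

/-- Dangling edges: tree edges at maximal depth, with a single endpoint in the tree. -/
def IsDangling (d : ℕ) (a b : V d) (i : ℕ) (l : List (V d)) : Prop :=
  IsTreeEdge d a b i l ∧ l.length = i + 2

/-- The check of `T_d` associated with a tree vertex. -/
def vcheck {d : ℕ} (l : List (V d)) : V d := l.getLastD 0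

/-- Incidence between a tree vertex and a tree edge. -/
def IncidentVE {d : ℕ} (lv le : List (V d)) : Prop :=
  lv = le ∨ lv = le.dropLast ∨ (le.length = 2 ∧ lv = le.reverse)

/-- A configuration on the decoding tree for syndrome `s`: an edge labelling such
that around every tree vertex, the mod-2 sum of the labels of the incident edges
equals the syndrome value of the associated check. -/
def IsConfig (d : ℕ) (a b : V d) (i : ℕ) (s : V d → ZMod 2)
    (C : List (V d) → ZMod 2) : Prop :=
  ∀ lv, IsTreeVertex d a b i lv →
    (Nat.card {le : List (V d) //
        IsTreeEdge d a b i le ∧ IncidentVE lv le ∧ C le = 1} : ZMod 2) = s (vcheck lv)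

/-- Weight of a configuration: its number of labeled tree edges. -/
noncomputable def cweight (d : ℕ) (a b : V d) (i : ℕ) (C : List (V d) → ZMod 2) : ℕ :=
  Nat.card {le : List (V d) // IsTreeEdge d a b i le ∧ C le = 1}

/-- Minimal weight of a configuration whose root edge has label `r`. -/
noncomputable def minW (d : ℕ) (a b : V d) (i : ℕ) (s : V d → ZMod 2) (r : ZMod 2) : ℕ :=
  sInf {n : ℕ | ∃ C : List (V d) → ZMod 2,
    IsConfig d a b i s C ∧ C [a, b] = r ∧ cweight d a b i C = n}

/-- A posteriori value of the (oriented) qubit `(a,b)` at iteration `i` computed by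
min-sum (Wiberg): minimal root-labeled weight minus minimal root-unlabeled weight. -/
noncomputable def APPo (d : ℕ) (s : V d → ZMod 2) (i : ℕ) (a b : V d) : ℤ :=
  (minW d a b i s 1 : ℤ) - (minW d a b i s 0 : ℤ)

/-- A posteriori value of a qubit (an unordered edge) at iteration `i`. -/
noncomputable def APP (d : ℕ) (s : V d → ZMod 2) (i : ℕ) : Sym2 (V d) → ℤ :=
  Sym2.lift ⟨fun a b => min (APPo d s i a b) (APPo d s i b a), fun _ _ => min_comm _ _⟩

/-- The MS hard-decision estimate at iteration `i`. -/
noncomputable def hatE (d : ℕ) (s : V d → ZMod 2) (i : ℕ) : (Toric d).edgeSet → ZMod 2 :=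
  fun q => if APP d s i q.val < 0 then 1 else 0

/-- `s` is decoded by MS in `k` iterations: the estimate satisfies the syndrome at
iteration `k` and not before. -/
def DecodedIn (d : ℕ) (s : V d → ZMod 2) (k : ℕ) : Prop :=
  1 ≤ k ∧ synd (hatE d s k) = s ∧ ∀ j, 1 ≤ j → j < k → synd (hatE d s j) ≠ s

/-- The error `e` is correctly decoded by MS. -/
def CorrectlyDecoded {d : ℕ} (e : (Toric d).edgeSet → ZMod 2) : Prop :=
  ∃ k, DecodedIn d (synd e) k ∧ hatE d (synd e) k = e

/-- Length of the longest common prefix of two lists. -/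
def cpl {d : ℕ} : List (V d) → List (V d) → ℕ
  | x :: xs, y :: ys => if x = y then cpl xs ys + 1 else 0
  | _, _ => 0

/-- Distance (number of edges of the connecting path) between two tree vertices. -/
def treeDist {d : ℕ} (lu lv : List (V d)) : ℕ :=
  if lu.take 2 = lv.take 2 then lu.length + lv.length - 2 * cpl lu lv
  else lu.length + lv.length - 3

/-- Strip a dangling edge down to its unique endpoint vertex. -/
def stripD {d : ℕ} (i : ℕ) (l : List (V d)) : List (V d) :=
  if l.length = i + 2 then l.dropLast else l

/-- `le` is an edge on the (unique) tree path between tree vertices `lu` and `lv`. -/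
def OnPathVV {d : ℕ} (lu lv le : List (V d)) : Prop :=
  if lu.take 2 = lv.take 2 then (le <+: lu ∨ le <+: lv) ∧ cpl lu lv < le.length
  else ((le <+: lu ∨ le <+: lv) ∧ 3 ≤ le.length) ∨ le.length = 2

/-- `lw` is a vertex on the (unique) tree path between tree vertices `lu` and `lv`. -/
def OnPathVertexVV {d : ℕ} (lu lv lw : List (V d)) : Prop :=
  if lu.take 2 = lv.take 2 then (lw <+: lu ∨ lw <+: lv) ∧ cpl lu lv ≤ lw.length
  else (lw <+: lu ∨ lw <+: lv) ∧ 2 ≤ lw.length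

/-- A link of the decoding tree `T_{i,q}` for syndrome `s`: a path in the tree
whose vertex endpoints (if any) are associated with unsatisfied checks; an
endpoint is either a tree vertex or a dangling edge. -/
structure Link (d : ℕ) (a b : V d) (i : ℕ) (s : V d → ZMod 2) where
  endA : List (V d)
  endB : List (V d)
  hA : IsTreeVertex d a b i endA ∨ IsDangling d a b i endA
  hB : IsTreeVertex d a b i endB ∨ IsDangling d a b i endB
  hAu : IsTreeVertex d a b i endA → s (vcheck endA) = 1
  hBu : IsTreeVertex d a b i endB → s (vcheck endB) = 1
  hne : endA ≠ endB

variable {d : ℕ} {a b : V d} {i : ℕ} {s : V d → ZMod 2}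

/-- The tree edges lying on a link. -/
def Link.on (L : Link d a b i s) (le : List (V d)) : Prop :=
  OnPathVV (stripD i L.endA) (stripD i L.endB) le ∨
    (L.endA.length = i + 2 ∧ le = L.endA) ∨ (L.endB.length = i + 2 ∧ le = L.endB)

/-- The length (number of edges) of a link. -/
def Link.len (L : Link d a b i s) : ℕ :=
  treeDist (stripD i L.endA) (stripD i L.endB) +
    (if L.endA.length = i + 2 then 1 else 0) + (if L.endB.length = i + 2 then 1 else 0)

/-- A proper link: both endpoints are (unsatisfied) tree vertices. -/
def Link.Proper (L : Link d a b i s) : Prop :=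
  IsTreeVertex d a b i L.endA ∧ IsTreeVertex d a b i L.endB

/-- A labeled link (w.r.t. a configuration `C`): all its edges are labeled. -/
def Link.IsLabeled (L : Link d a b i s) (C : List (V d) → ZMod 2) : Prop :=
  ∀ le, IsTreeEdge d a b i le → L.on le → C le = 1

/-- A maximal labeled link: it cannot be extended into a longer labeled link. -/
def Link.IsMaxLabeled (L : Link d a b i s) (C : List (V d) → ZMod 2) : Prop :=
  L.IsLabeled C ∧
    ∀ L' : Link d a b i s, L'.IsLabeled C → (∀ le, L.on le → L'.on le) → L'.len ≤ L.len

/-- An `I`-link: a proper link of length 4 not containing the root, descending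
four levels of the tree. -/
def Link.IsI (L : Link d a b i s) : Prop :=
  L.Proper ∧ L.len = 4 ∧ ¬ L.on [a, b] ∧
    (L.endA.length + 4 = L.endB.length ∨ L.endB.length + 4 = L.endA.length)

/-- A `Γ`-link: a proper link of length 4 not containing the root, going up one
level then down three. -/
def Link.IsGamma (L : Link d a b i s) : Prop :=
  L.Proper ∧ L.len = 4 ∧ ¬ L.on [a, b] ∧
    (L.endA.length + 2 = L.endB.length ∨ L.endB.length + 2 = L.endA.length)

/-- A `Λ`-link: a proper link of length 4 not containing the root, going up two
levels then down two (its endpoints are at the same depth). -/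
def Link.IsLambda (L : Link d a b i s) : Prop :=
  L.Proper ∧ L.len = 4 ∧ ¬ L.on [a, b] ∧ L.endA.length = L.endB.length

/-- Distance of a tree vertex to the bottom: minimal length of a path starting
at that vertex and ending with a dangling edge. -/
noncomputable def distToBottom (d : ℕ) (a b : V d) (i : ℕ) (lv : List (V d)) : ℕ :=
  sInf {n : ℕ | ∃ le, IsDangling d a b i le ∧ n = treeDist lv le.dropLast + 1}

/-- A walk in the decoding tree: a sequence of tree edges `es` together with the
sequence `vs` of tree vertices through which consecutive edges are traversed. -/
structure TreeWalk (d : ℕ) (a b : V d) (i : ℕ) where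
  es : List (List (V d))
  vs : List (List (V d))
  hlen : vs.length + 1 = es.length
  hes : ∀ le ∈ es, IsTreeEdge d a b i le
  hvs : ∀ lv ∈ vs, IsTreeVertex d a b i lv
  hinc : ∀ (j : ℕ) (hj : j < vs.length),
    IncidentVE (vs[j]'hj) (es[j]'(by omega)) ∧ IncidentVE (vs[j]'hj) (es[j + 1]'(by omega))
  htrav : ∀ (j : ℕ) (hj : j + 1 < vs.length), vs[j]'(by omega) ≠ vs[j + 1]'hj

/-- The four unit directions of the square lattice. -/
def dirVec (d : ℕ) : Fin 4 → V d := ![(1, 0), (0, 1), (-1, 0), (0, -1)]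

/-- A rigid embedding of a patch `K` of `T_d` into `T_{d'}`: an injective map
which, up to a fixed symmetry `g` of the square (an element of the dihedral
group acting on the four directions), preserves the local square-lattice
structure — hence it is an injective graph homomorphism mapping plaquettes to
plaquettes. -/
def IsRigidEmbed (d d' : ℕ) (K : Set (V d)) (φ : V d → V d') : Prop :=
  Set.InjOn φ K ∧ ∃ g : Fin 4 → Fin 4, Function.Bijective g ∧
    (∀ j, g (j + 2) = g j + 2) ∧
    ∀ x ∈ K, ∀ j : Fin 4, x + dirVec d j ∈ K →
      φ (x + dirVec d j) = φ x + dirVec d' (g j)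

/-- The embedding of a syndrome under an embedding map `φ`. -/
noncomputable def embedSynd (d d' : ℕ) (s : V d → ZMod 2) (φ : V d → V d') :
    V d' → ZMod 2 :=
  fun c' => @ite _ (∃ c, s c = 1 ∧ φ c = c') (Classical.propDecidable _) 1 0

-- ===================== auxiliary lemmas =====================
section Aux
variable {d : ℕ}

lemma cpl_cons_cons (x y : V d) (xs ys : List (V d)) :
    cpl (x::xs) (y::ys) = if x = y then cpl xs ys + 1 else 0 := rfl

lemma cpl_nil_left (l : List (V d)) : cpl [] l = 0 := by cases l <;> rfl

lemma cpl_nil_right (l : List (V d)) : cpl l [] = 0 := by cases l <;> rfl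

lemma cpl_le_left (l l' : List (V d)) : cpl l l' ≤ l.length := by
  induction l generalizing l' with
  | nil => cases l' <;> simp [cpl]
  | cons x xs ih =>
    cases l' with
    | nil => simp [cpl]
    | cons y ys =>
      rw [cpl_cons_cons]
      split
      · simpa using ih ys
      · simp

lemma cpl_comm (l l' : List (V d)) : cpl l l' = cpl l' l := by
  induction l generalizing l' with
  | nil => cases l' <;> simp [cpl]
  | cons x xs ih =>
    cases l' with
    | nil => simp [cpl]
    | cons y ys =>
      rw [cpl_cons_cons, cpl_cons_cons]
      by_cases h : x = y
      · rw [if_pos h, if_pos h.symm, ih]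
      · rw [if_neg h, if_neg (fun hh => h hh.symm)]

lemma cpl_le_right (l l' : List (V d)) : cpl l l' ≤ l'.length := by
  rw [cpl_comm]; exact cpl_le_left l' l

lemma le_cpl_of_take_eq (k : ℕ) (l l' : List (V d)) (hk : k ≤ l.length)
    (h : l.take k = l'.take k) : k ≤ cpl l l' := by
  induction k generalizing l l' with
  | zero => omega
  | succ n ih =>
    cases l with
    | nil => simp at hk
    | cons x xs =>
      cases l' with
      | nil => simp at h
      | cons y ys =>
        simp only [List.take_succ_cons, List.cons.injEq] at h
        obtain ⟨rfl, h2⟩ := h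
        rw [cpl_cons_cons, if_pos rfl]
        have := ih xs ys (by simpa using hk) h2
        omega

lemma take_cpl_eq (j : ℕ) (l l' : List (V d)) (hj : j ≤ cpl l l') :
    l.take j = l'.take j := by
  induction l generalizing l' j with
  | nil =>
    rw [cpl_nil_left] at hj
    interval_cases j
    simp
  | cons x xs ih =>
    cases l' with
    | nil => rw [cpl_nil_right] at hj; interval_cases j; simp
    | cons y ys =>
      rw [cpl_cons_cons] at hj
      by_cases h : x = y
      · subst h
        rw [if_pos rfl] at hj
        cases j with
        | zero => simp
        | succ n => simp [List.take_succ_cons, ih n ys (by omega)]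
      · rw [if_neg h] at hj
        interval_cases j
        simp

lemma getD_eq_of_lt_cpl (j : ℕ) (l l' : List (V d)) (hj : j < cpl l l') :
    l.getD j 0 = l'.getD j 0 := by
  have h1 := take_cpl_eq (j+1) l l' hj
  have := congrArg (fun t => t.getD j (0 : V d)) h1
  simpa [List.getD, List.getElem?_take, Nat.lt_succ_self] using this

lemma getD_ne_cpl (l l' : List (V d)) (h1 : cpl l l' < l.length)
    (h2 : cpl l l' < l'.length) : l.getD (cpl l l') 0 ≠ l'.getD (cpl l l') 0 := by
  induction l generalizing l' with
  | nil => simp at h1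
  | cons x xs ih =>
    cases l' with
    | nil => simp at h2
    | cons y ys =>
      rw [cpl_cons_cons] at h1 h2 ⊢
      by_cases h : x = y
      · rw [if_pos h] at h1 h2
        rw [if_pos h]
        subst h
        simpa using ih ys (by simpa using h1) (by simpa using h2)
      · rw [if_neg h]
        simpa using h

lemma vcheck_eq_getD (l : List (V d)) (h : l ≠ []) :
    vcheck l = l.getD (l.length - 1) 0 := by
  rw [vcheck, List.getLastD_eq_getLast?, List.getLast?_eq_getElem?]
  simp [List.getD]

lemma chain_getD {R : V d → V d → Prop} {l : List (V d)} (h : l.Chain' R) (j : ℕ)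
    (hj : j + 1 < l.length) : R (l.getD j 0) (l.getD (j+1) 0) := by
  rw [List.getD_eq_getElem l _ (show j < l.length by omega),
    List.getD_eq_getElem l _ hj]
  have := List.isChain_iff_getElem.mp h j (by omega)
  simpa using this

lemma ww_getD {l : List (V d)} (h : ∀ j : ℕ, j + 2 < l.length → l[j]? ≠ l[j+2]?)
    (j : ℕ) (hj : j + 2 < l.length) : l.getD j 0 ≠ l.getD (j+2) 0 := by
  intro heq
  apply h j hj
  rw [List.getElem?_eq_getElem (by omega : j < l.length),
    List.getElem?_eq_getElem (by omega : j + 2 < l.length)]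
  rw [List.getD_eq_getElem l _ (by omega : j < l.length),
    List.getD_eq_getElem l _ (by omega : j + 2 < l.length)] at heq
  exact congrArg some heq

lemma take_two_eq (l : List (V d)) (h : 2 ≤ l.length) :
    l.take 2 = [l.getD 0 0, l.getD 1 0] := by
  match l, h with
  | x :: y :: rest, _ => simp [List.getD]

lemma getD_take_lt (l : List (V d)) (i k : ℕ) (h : i < k) :
    (l.take k).getD i 0 = l.getD i 0 := by
  simp [List.getD, List.getElem?_take, h]

lemma getLastD_ne_nil (l : List (V d)) (h : l ≠ []) (a : V d) :
    l.getLastD a = l.getLastD 0 := by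
  cases l with
  | nil => simp at h
  | cons x xs => simp [List.getLastD]

end Aux
-- ===================== walk construction =====================
section Walk
variable {d : ℕ}

/-- The walk in `T_d` tracing the tree path from `vcheck lu` up to the common
ancestor (at prefix length `k`) and down to `vcheck lv`. -/
def wkf (lu lv : List (V d)) (k : ℕ) (j : ℕ) : V d :=
  if j ≤ lu.length - k then lu.getD (lu.length - 1 - j) 0
  else lv.getD (j - (lu.length - k) + k - 1) 0

lemma wkf_low (lu lv : List (V d)) (k j : ℕ) (hj : j ≤ lu.length - k) :
    wkf lu lv k j = lu.getD (lu.length - 1 - j) 0 := if_pos hj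

lemma wkf_zero (lu lv : List (V d)) (k : ℕ) :
    wkf lu lv k 0 = lu.getD (lu.length - 1) 0 := by
  rw [wkf_low lu lv k 0 (by omega)]
  congr 1

lemma wkf_last (lu lv : List (V d)) (k : ℕ) (hk1 : 1 ≤ k) (hku : k ≤ lu.length)
    (hkv : k ≤ lv.length) (htake : lu.take k = lv.take k) :
    wkf lu lv k ((lu.length - k) + (lv.length - k)) = lv.getD (lv.length - 1) 0 := by
  by_cases h : k = lv.length
  · have h0 : (lu.length - k) + (lv.length - k) ≤ lu.length - k := by omega
    rw [wkf_low lu lv k _ h0]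
    have e1 : lu.length - 1 - (lu.length - k + (lv.length - k)) = k - 1 := by omega
    rw [e1]
    have := congrArg (fun t => t.getD (k-1) (0 : V d)) htake
    rw [getD_take_lt lu (k-1) k (by omega), getD_take_lt lv (k-1) k (by omega)] at this
    rw [this]
    congr 1
    omega
  · rw [wkf, if_neg (by omega)]
    congr 1
    omega

lemma wkf_adj (lu lv : List (V d)) (k : ℕ) (hu : lu.Chain' (Toric d).Adj)
    (hv : lv.Chain' (Toric d).Adj) (htake : lu.take k = lv.take k)
    (hk1 : 1 ≤ k) (hku : k ≤ lu.length) (hkv : k ≤ lv.length) (j : ℕ)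
    (hj : j + 1 ≤ (lu.length - k) + (lv.length - k)) :
    (Toric d).Adj (wkf lu lv k j) (wkf lu lv k (j+1)) := by
  rcases lt_trichotomy j (lu.length - k) with hc | hc | hc
  · -- both on the way up
    rw [wkf_low lu lv k j (by omega), wkf_low lu lv k (j+1) (by omega)]
    have e1 : lu.length - 1 - j = (lu.length - 2 - j) + 1 := by omega
    have e2 : lu.length - 1 - (j+1) = lu.length - 2 - j := by omega
    rw [e1, e2]
    exact ((Toric d).adj_symm (chain_getD hu (lu.length - 2 - j) (by omega)))
  · -- junction
    rw [wkf_low lu lv k j (by omega), wkf, if_neg (by omega)]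
    have e1 : lu.length - 1 - j = k - 1 := by omega
    have e2 : j + 1 - (lu.length - k) + k - 1 = k := by omega
    rw [e1, e2]
    have hkb : k + 1 ≤ lv.length := by omega
    have ht : lu.getD (k-1) 0 = lv.getD (k-1) 0 := by
      have := congrArg (fun t => t.getD (k-1) (0 : V d)) htake
      rwa [getD_take_lt lu (k-1) k (by omega), getD_take_lt lv (k-1) k (by omega)] at this
    rw [ht]
    have e3 : k = (k - 1) + 1 := by omega
    rw [e3]
    exact chain_getD hv (k-1) (by omega)
  · -- both on the way down
    rw [wkf, if_neg (by omega), wkf, if_neg (by omega)]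
    have e1 : j + 1 - (lu.length - k) + k - 1 = (j - (lu.length - k) + k - 1) + 1 := by omega
    rw [e1]
    exact chain_getD hv (j - (lu.length - k) + k - 1) (by omega)

end Walk

-- ===================== lattice geometry =====================
section Lattice

/-- Integer unit steps. -/
def Dz : List (ℤ × ℤ) := [(1,0),(-1,0),(0,1),(0,-1)]

/-- Integer differences of unsatisfied checks. -/
def Uz : List (ℤ × ℤ) := [(0,0),(4,0),(-4,0)]

lemma zkey3 : ∀ s0 ∈ Dz, ∀ s1 ∈ Dz, ∀ s2 ∈ Dz, s0+s1+s2 ∉ Uz := by decide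

/-- Integer vectors of sup-norm at most 9 that can vanish mod `d` for some `d ≥ 9`. -/
def Kz : List (ℤ × ℤ) := [(0,0),(9,0),(-9,0),(0,9),(0,-9),(9,9),(9,-9),(-9,9),(-9,-9)]

lemma zkeyA : ∀ s0 ∈ Dz, ∀ s1 ∈ Dz, ∀ s2 ∈ Dz, ∀ s3 ∈ Dz, ∀ s4 ∈ Dz, ∀ t ∈ Uz,
    s0+s1+s2+s3+s4-t ∈ Kz →
    s0 = s1 ∧ s1 = s2 ∧ s2 = s3 ∧ s3 = s4 ∧ (s0 = (1,0) ∨ s0 = (-1,0)) := by decide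

lemma zkeyB : ∀ s ∈ [((1:ℤ),(0:ℤ)),(-1,0)], ∀ f ∈ Dz, ∀ g ∈ Dz, ∀ t' ∈ Uz,
    s+s+f+g-t' ∈ Kz → f+s ≠ 0 → f ≠ s → False := by decide

lemma zkey4 : ∀ s0 ∈ Dz, ∀ s1 ∈ Dz, ∀ s2 ∈ Dz, ∀ s3 ∈ Dz, ∀ f ∈ Dz, ∀ g ∈ Dz,
    s0+s1+s2+s3 ∈ Uz → s0+s1 ≠ 0 → s1+s2 ≠ 0 → f+s1 ≠ 0 → f ≠ s2 →
    s0+s1+f+g ∈ Uz → False := by decide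

variable {d : ℕ}

/-- Embedding of integer vectors into the torus. -/
def iz (d : ℕ) (p : ℤ × ℤ) : V d := ((p.1 : ZMod d), (p.2 : ZMod d))

lemma iz_add (p q : ℤ × ℤ) : iz d (p + q) = iz d p + iz d q := by
  simp [iz, Prod.ext_iff]

lemma iz_sub (p q : ℤ × ℤ) : iz d (p - q) = iz d p - iz d q := by
  simp [iz, Prod.ext_iff]

lemma iz_zero : iz d 0 = 0 := by simp [iz, Prod.ext_iff]

/-- The set of unsatisfied checks of `s⁴`. -/
def Uv (d : ℕ) (v : V d) : Prop :=
  v = ((0 : ZMod d), (0 : ZMod d)) ∨ v = ((4 : ZMod d), (0 : ZMod d))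

lemma adj_step {u v : V d} (h : (Toric d).Adj u v) : ∃ s ∈ Dz, v - u = iz d s := by
  obtain ⟨-, h⟩ := (h : u ≠ v ∧ (u - v = (1, 0) ∨ u - v = (-1, 0) ∨ u - v = (0, 1) ∨ u - v = (0, -1)))
  rcases h with h | h | h | h
  · exact ⟨(-1,0), by simp [Dz], by rw [show v - u = -(u - v) by ring, h]; simp [iz, Prod.ext_iff]⟩
  · exact ⟨(1,0), by simp [Dz], by rw [show v - u = -(u - v) by ring, h]; simp [iz, Prod.ext_iff]⟩
  · exact ⟨(0,-1), by simp [Dz], by rw [show v - u = -(u - v) by ring, h]; simp [iz, Prod.ext_iff]⟩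
  · exact ⟨(0,1), by simp [Dz], by rw [show v - u = -(u - v) by ring, h]; simp [iz, Prod.ext_iff]⟩

lemma U_diff {u v : V d} (hu : Uv d u) (hv : Uv d v) : ∃ t ∈ Uz, v - u = iz d t := by
  rcases hu with rfl | rfl <;> rcases hv with rfl | rfl
  · exact ⟨(0,0), by simp [Uz], by simp [iz, Prod.ext_iff]⟩
  · exact ⟨(4,0), by simp [Uz], by simp [iz, Prod.ext_iff]⟩
  · refine ⟨(-4,0), by simp [Uz], ?_⟩
    rw [iz, Prod.mk_sub_mk, Prod.mk.injEq]
    push_cast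
    constructor <;> ring
  · exact ⟨(0,0), by simp [Uz], by simp [iz, Prod.ext_iff]⟩

lemma iz_inj_small (hd : 9 ≤ d) (p : ℤ × ℤ) (h1 : |p.1| ≤ 8) (h2 : |p.2| ≤ 8)
    (h : iz d p = 0) : p = 0 := by
  have hh : ∀ x : ℤ, |x| ≤ 8 → (x : ZMod d) = 0 → x = 0 := by
    intro x hx hx0
    have hdvd : (d : ℤ) ∣ x := (ZMod.intCast_zmod_eq_zero_iff_dvd x d).mp hx0
    exact Int.eq_zero_of_abs_lt_dvd hdvd (by omega)
  rw [iz, Prod.ext_iff] at h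
  simp only [Prod.fst_zero, Prod.snd_zero] at h
  exact Prod.ext_iff.mpr ⟨hh _ h1 h.1, hh _ h2 h.2⟩

lemma coord9 (hd : 9 ≤ d) (x : ℤ) (hx : |x| ≤ 9) (h : (x : ZMod d) = 0) :
    x = 0 ∨ x = 9 ∨ x = -9 := by
  obtain ⟨q, rfl⟩ := (ZMod.intCast_zmod_eq_zero_iff_dvd x d).mp h
  have hd' : (9:ℤ) ≤ (d:ℤ) := by exact_mod_cast hd
  have hb := abs_le.mp hx
  rcases lt_trichotomy q 0 with hq | hq | hq
  · right; right
    have h1 : (d:ℤ) * q ≤ (d:ℤ) * (-1) := by nlinarith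
    nlinarith
  · left; simp [hq]
  · right; left
    have h1 : (d:ℤ) * 1 ≤ (d:ℤ) * q := by nlinarith
    nlinarith

lemma iz_mem9 (hd : 9 ≤ d) (p : ℤ × ℤ) (h1 : |p.1| ≤ 9) (h2 : |p.2| ≤ 9)
    (h : iz d p = 0) : p ∈ Kz := by
  rw [iz, Prod.ext_iff] at h
  simp only [Prod.fst_zero, Prod.snd_zero] at h
  have c1 := coord9 hd p.1 h1 h.1
  have c2 := coord9 hd p.2 h2 h.2
  have : p = (p.1, p.2) := rfl
  rw [this]
  rcases c1 with e1 | e1 | e1 <;> rcases c2 with e2 | e2 | e2 <;>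
    rw [e1, e2] <;> simp [Kz]

lemma Dz_bound {s : ℤ × ℤ} (h : s ∈ Dz) : |s.1| ≤ 1 ∧ |s.2| ≤ 1 := by
  simp only [Dz, List.mem_cons, List.not_mem_nil, or_false] at h
  rcases h with rfl | rfl | rfl | rfl <;> norm_num

lemma Uz_bound {s : ℤ × ℤ} (h : s ∈ Uz) : |s.1| ≤ 4 ∧ |s.2| ≤ 4 := by
  simp only [Uz, List.mem_cons, List.not_mem_nil, or_false] at h
  rcases h with rfl | rfl | rfl <;> norm_num

end Lattice
-- ===================== contradiction lemmas =====================
section CL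
variable {d : ℕ}

lemma CL3 (hd : 9 ≤ d) {u0 u1 u2 u3 : V d}
    (h01 : (Toric d).Adj u0 u1) (h12 : (Toric d).Adj u1 u2)
    (h23 : (Toric d).Adj u2 u3) (hu0 : Uv d u0) (hu3 : Uv d u3) : False := by
  obtain ⟨s0, hs0, e0⟩ := adj_step h01
  obtain ⟨s1, hs1, e1⟩ := adj_step h12
  obtain ⟨s2, hs2, e2⟩ := adj_step h23
  obtain ⟨t, ht, et⟩ := U_diff hu0 hu3
  have key : iz d (s0 + s1 + s2 - t) = 0 := by
    rw [iz_sub, iz_add, iz_add, ← e0, ← e1, ← e2, ← et]; ring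
  have b0 := Dz_bound hs0; have b1 := Dz_bound hs1; have b2 := Dz_bound hs2
  have bt := Uz_bound ht
  have hz : s0 + s1 + s2 - t = 0 := by
    apply iz_inj_small hd _ ?_ ?_ key
    · have a0 := abs_le.mp b0.1; have a1 := abs_le.mp b1.1
      have a2 := abs_le.mp b2.1; have a3 := abs_le.mp bt.1
      simp only [Prod.fst_add, Prod.fst_sub]
      rw [abs_le]; omega
    · have a0 := abs_le.mp b0.2; have a1 := abs_le.mp b1.2
      have a2 := abs_le.mp b2.2; have a3 := abs_le.mp bt.2
      simp only [Prod.snd_add, Prod.snd_sub]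
      rw [abs_le]; omega
  have hfin : s0 + s1 + s2 = t := by rwa [sub_eq_zero] at hz
  exact zkey3 s0 hs0 s1 hs1 s2 hs2 (hfin ▸ ht)

lemma CL5 (hd : 9 ≤ d) {u0 u1 u2 u3 u4 u5 y1 y2 : V d}
    (h01 : (Toric d).Adj u0 u1) (h12 : (Toric d).Adj u1 u2)
    (h23 : (Toric d).Adj u2 u3) (h34 : (Toric d).Adj u3 u4)
    (h45 : (Toric d).Adj u4 u5)
    (hy : (Toric d).Adj u2 y1) (hyy : (Toric d).Adj y1 y2)
    (hu0 : Uv d u0) (hu5 : Uv d u5) (hy2 : Uv d y2)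
    (ny1 : y1 ≠ u1) (ny3 : y1 ≠ u3) : False := by
  obtain ⟨s0, hs0, e0⟩ := adj_step h01
  obtain ⟨s1, hs1, e1⟩ := adj_step h12
  obtain ⟨s2, hs2, e2⟩ := adj_step h23
  obtain ⟨s3, hs3, e3⟩ := adj_step h34
  obtain ⟨s4, hs4, e4⟩ := adj_step h45
  obtain ⟨f, hf, ef⟩ := adj_step hy
  obtain ⟨g, hg, eg⟩ := adj_step hyy
  obtain ⟨t, ht, et⟩ := U_diff hu0 hu5
  obtain ⟨t', ht', et'⟩ := U_diff hu0 hy2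
  have b0 := Dz_bound hs0; have b1 := Dz_bound hs1; have b2 := Dz_bound hs2
  have b3 := Dz_bound hs3; have b4 := Dz_bound hs4
  have bf := Dz_bound hf; have bg := Dz_bound hg
  have bt := Uz_bound ht; have bt' := Uz_bound ht'
  have key1 : iz d (s0 + s1 + s2 + s3 + s4 - t) = 0 := by
    rw [iz_sub, iz_add, iz_add, iz_add, iz_add, ← e0, ← e1, ← e2, ← e3, ← e4, ← et]; ring
  have mem1 : s0 + s1 + s2 + s3 + s4 - t ∈ Kz := by
    apply iz_mem9 hd _ ?_ ?_ key1
    · have a0 := abs_le.mp b0.1; have a1 := abs_le.mp b1.1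
      have a2 := abs_le.mp b2.1; have a3 := abs_le.mp b3.1
      have a4 := abs_le.mp b4.1; have a5 := abs_le.mp bt.1
      simp only [Prod.fst_add, Prod.fst_sub]
      rw [abs_le]; omega
    · have a0 := abs_le.mp b0.2; have a1 := abs_le.mp b1.2
      have a2 := abs_le.mp b2.2; have a3 := abs_le.mp b3.2
      have a4 := abs_le.mp b4.2; have a5 := abs_le.mp bt.2
      simp only [Prod.snd_add, Prod.snd_sub]
      rw [abs_le]; omega
  obtain ⟨q1, q2, q3, q4, q5⟩ := zkeyA s0 hs0 s1 hs1 s2 hs2 s3 hs3 s4 hs4 t ht mem1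
  have key2 : iz d (s0 + s1 + f + g - t') = 0 := by
    rw [iz_sub, iz_add, iz_add, iz_add, ← e0, ← e1, ← ef, ← eg, ← et']; ring
  have mem2 : s0 + s1 + f + g - t' ∈ Kz := by
    apply iz_mem9 hd _ ?_ ?_ key2
    · have a0 := abs_le.mp b0.1; have a1 := abs_le.mp b1.1
      have a2 := abs_le.mp bf.1; have a3 := abs_le.mp bg.1
      have a5 := abs_le.mp bt'.1
      simp only [Prod.fst_add, Prod.fst_sub]
      rw [abs_le]; omega
    · have a0 := abs_le.mp b0.2; have a1 := abs_le.mp b1.2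
      have a2 := abs_le.mp bf.2; have a3 := abs_le.mp bg.2
      have a5 := abs_le.mp bt'.2
      simp only [Prod.snd_add, Prod.snd_sub]
      rw [abs_le]; omega
  have n3 : f + s1 ≠ 0 := by
    intro h
    apply ny1
    have : y1 - u1 = iz d (f + s1) := by rw [iz_add, ← ef, ← e1]; ring
    rw [h, iz_zero] at this
    exact sub_eq_zero.mp this
  have n4 : f ≠ s2 := by
    intro h
    apply ny3
    have : y1 - u3 = iz d (f - s2) := by rw [iz_sub, ← ef, ← e2]; ring
    rw [h, sub_self, iz_zero] at this
    exact sub_eq_zero.mp this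
  have hs0mem : s0 ∈ [((1:ℤ),(0:ℤ)),(-1,0)] := by
    rcases q5 with h | h <;> rw [h] <;> simp
  apply zkeyB s0 hs0mem f hf g hg t' ht' ?_ ?_ ?_
  · rw [show s0 + s0 + f + g - t' = s0 + s1 + f + g - t' by rw [← q1]]
    exact mem2
  · rw [show f + s0 = f + s1 by rw [← q1]]
    exact n3
  · rw [show s0 = s2 by rw [q1, q2]]
    exact n4

lemma CL4 (hd : 9 ≤ d) {u0 u1 u2 u3 u4 y1 y2 : V d}
    (h01 : (Toric d).Adj u0 u1) (h12 : (Toric d).Adj u1 u2)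
    (h23 : (Toric d).Adj u2 u3) (h34 : (Toric d).Adj u3 u4)
    (hy : (Toric d).Adj u2 y1) (hyy : (Toric d).Adj y1 y2)
    (hu0 : Uv d u0) (hu4 : Uv d u4) (hy2 : Uv d y2)
    (n02 : u0 ≠ u2) (n13 : u1 ≠ u3) (ny1 : y1 ≠ u1) (ny3 : y1 ≠ u3) : False := by
  obtain ⟨s0, hs0, e0⟩ := adj_step h01
  obtain ⟨s1, hs1, e1⟩ := adj_step h12
  obtain ⟨s2, hs2, e2⟩ := adj_step h23
  obtain ⟨s3, hs3, e3⟩ := adj_step h34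
  obtain ⟨f, hf, ef⟩ := adj_step hy
  obtain ⟨g, hg, eg⟩ := adj_step hyy
  obtain ⟨t, ht, et⟩ := U_diff hu0 hu4
  obtain ⟨t', ht', et'⟩ := U_diff hu0 hy2
  have b0 := Dz_bound hs0; have b1 := Dz_bound hs1; have b2 := Dz_bound hs2
  have b3 := Dz_bound hs3; have bf := Dz_bound hf; have bg := Dz_bound hg
  have bt := Uz_bound ht; have bt' := Uz_bound ht'
  have key1 : iz d (s0 + s1 + s2 + s3 - t) = 0 := by
    rw [iz_sub, iz_add, iz_add, iz_add, ← e0, ← e1, ← e2, ← e3, ← et]; ring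
  have key2 : iz d (s0 + s1 + f + g - t') = 0 := by
    rw [iz_sub, iz_add, iz_add, iz_add, ← e0, ← e1, ← ef, ← eg, ← et']; ring
  have hz1 : s0 + s1 + s2 + s3 = t := by
    rw [← sub_eq_zero]
    apply iz_inj_small hd _ ?_ ?_ key1
    · have a0 := abs_le.mp b0.1; have a1 := abs_le.mp b1.1
      have a2 := abs_le.mp b2.1; have a3 := abs_le.mp b3.1
      have a5 := abs_le.mp bt.1
      simp only [Prod.fst_add, Prod.fst_sub]
      rw [abs_le]; omega
    · have a0 := abs_le.mp b0.2; have a1 := abs_le.mp b1.2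
      have a2 := abs_le.mp b2.2; have a3 := abs_le.mp b3.2
      have a5 := abs_le.mp bt.2
      simp only [Prod.snd_add, Prod.snd_sub]
      rw [abs_le]; omega
  have hz2 : s0 + s1 + f + g = t' := by
    rw [← sub_eq_zero]
    apply iz_inj_small hd _ ?_ ?_ key2
    · have a0 := abs_le.mp b0.1; have a1 := abs_le.mp b1.1
      have a2 := abs_le.mp bf.1; have a3 := abs_le.mp bg.1
      have a5 := abs_le.mp bt'.1
      simp only [Prod.fst_add, Prod.fst_sub]
      rw [abs_le]; omega
    · have a0 := abs_le.mp b0.2; have a1 := abs_le.mp b1.2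
      have a2 := abs_le.mp bf.2; have a3 := abs_le.mp bg.2
      have a5 := abs_le.mp bt'.2
      simp only [Prod.snd_add, Prod.snd_sub]
      rw [abs_le]; omega
  have n1 : s0 + s1 ≠ 0 := by
    intro h
    apply n02
    have : u2 - u0 = iz d (s0 + s1) := by rw [iz_add, ← e0, ← e1]; ring
    rw [h, iz_zero] at this
    exact (sub_eq_zero.mp this).symm
  have n2 : s1 + s2 ≠ 0 := by
    intro h
    apply n13
    have : u3 - u1 = iz d (s1 + s2) := by rw [iz_add, ← e1, ← e2]; ring
    rw [h, iz_zero] at this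
    exact (sub_eq_zero.mp this).symm
  have n3 : f + s1 ≠ 0 := by
    intro h
    apply ny1
    have : y1 - u1 = iz d (f + s1) := by rw [iz_add, ← ef, ← e1]; ring
    rw [h, iz_zero] at this
    exact sub_eq_zero.mp this
  have n4 : f ≠ s2 := by
    intro h
    apply ny3
    have : y1 - u3 = iz d (f - s2) := by rw [iz_sub, ← ef, ← e2]; ring
    rw [h, sub_self, iz_zero] at this
    exact sub_eq_zero.mp this
  exact zkey4 s0 hs0 s1 hs1 s2 hs2 s3 hs3 f hf g hg (hz1 ▸ ht) n1 n2 n3 n4 (hz2 ▸ ht')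

end CL
-- ===================== syndrome of eps4 =====================
section Synd
variable {d : ℕ}

lemma zne (hd : 9 ≤ d) (a b : ℕ) (ha : a < 9) (hb : b < 9) (hab : a ≠ b) :
    (a : ZMod d) ≠ (b : ZMod d) := by
  intro h
  apply hab
  have := congrArg ZMod.val h
  rwa [ZMod.val_cast_of_lt (by omega), ZMod.val_cast_of_lt (by omega)] at this

lemma ne01 (hd : 9 ≤ d) : (0 : ZMod d) ≠ (1 : ZMod d) := by
  have := zne hd 0 1 (by norm_num) (by norm_num) (by norm_num)
  push_cast at this
  exact this

lemma ne02 (hd : 9 ≤ d) : (0 : ZMod d) ≠ (2 : ZMod d) := by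
  have := zne hd 0 2 (by norm_num) (by norm_num) (by norm_num)
  push_cast at this
  exact this

lemma ne03 (hd : 9 ≤ d) : (0 : ZMod d) ≠ (3 : ZMod d) := by
  have := zne hd 0 3 (by norm_num) (by norm_num) (by norm_num)
  push_cast at this
  exact this

lemma ne04 (hd : 9 ≤ d) : (0 : ZMod d) ≠ (4 : ZMod d) := by
  have := zne hd 0 4 (by norm_num) (by norm_num) (by norm_num)
  push_cast at this
  exact this

lemma ne10 (hd : 9 ≤ d) : (1 : ZMod d) ≠ (0 : ZMod d) := by
  have := zne hd 1 0 (by norm_num) (by norm_num) (by norm_num)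
  push_cast at this
  exact this

lemma ne12 (hd : 9 ≤ d) : (1 : ZMod d) ≠ (2 : ZMod d) := by
  have := zne hd 1 2 (by norm_num) (by norm_num) (by norm_num)
  push_cast at this
  exact this

lemma ne13 (hd : 9 ≤ d) : (1 : ZMod d) ≠ (3 : ZMod d) := by
  have := zne hd 1 3 (by norm_num) (by norm_num) (by norm_num)
  push_cast at this
  exact this

lemma ne14 (hd : 9 ≤ d) : (1 : ZMod d) ≠ (4 : ZMod d) := by
  have := zne hd 1 4 (by norm_num) (by norm_num) (by norm_num)
  push_cast at this
  exact this

lemma ne20 (hd : 9 ≤ d) : (2 : ZMod d) ≠ (0 : ZMod d) := by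
  have := zne hd 2 0 (by norm_num) (by norm_num) (by norm_num)
  push_cast at this
  exact this

lemma ne21 (hd : 9 ≤ d) : (2 : ZMod d) ≠ (1 : ZMod d) := by
  have := zne hd 2 1 (by norm_num) (by norm_num) (by norm_num)
  push_cast at this
  exact this

lemma ne23 (hd : 9 ≤ d) : (2 : ZMod d) ≠ (3 : ZMod d) := by
  have := zne hd 2 3 (by norm_num) (by norm_num) (by norm_num)
  push_cast at this
  exact this

lemma ne24 (hd : 9 ≤ d) : (2 : ZMod d) ≠ (4 : ZMod d) := by
  have := zne hd 2 4 (by norm_num) (by norm_num) (by norm_num)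
  push_cast at this
  exact this

lemma ne30 (hd : 9 ≤ d) : (3 : ZMod d) ≠ (0 : ZMod d) := by
  have := zne hd 3 0 (by norm_num) (by norm_num) (by norm_num)
  push_cast at this
  exact this

lemma ne31 (hd : 9 ≤ d) : (3 : ZMod d) ≠ (1 : ZMod d) := by
  have := zne hd 3 1 (by norm_num) (by norm_num) (by norm_num)
  push_cast at this
  exact this

lemma ne32 (hd : 9 ≤ d) : (3 : ZMod d) ≠ (2 : ZMod d) := by
  have := zne hd 3 2 (by norm_num) (by norm_num) (by norm_num)
  push_cast at this
  exact this

lemma ne34 (hd : 9 ≤ d) : (3 : ZMod d) ≠ (4 : ZMod d) := by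
  have := zne hd 3 4 (by norm_num) (by norm_num) (by norm_num)
  push_cast at this
  exact this

lemma ne40 (hd : 9 ≤ d) : (4 : ZMod d) ≠ (0 : ZMod d) := by
  have := zne hd 4 0 (by norm_num) (by norm_num) (by norm_num)
  push_cast at this
  exact this

lemma ne41 (hd : 9 ≤ d) : (4 : ZMod d) ≠ (1 : ZMod d) := by
  have := zne hd 4 1 (by norm_num) (by norm_num) (by norm_num)
  push_cast at this
  exact this

lemma ne42 (hd : 9 ≤ d) : (4 : ZMod d) ≠ (2 : ZMod d) := by
  have := zne hd 4 2 (by norm_num) (by norm_num) (by norm_num)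
  push_cast at this
  exact this

lemma ne43 (hd : 9 ≤ d) : (4 : ZMod d) ≠ (3 : ZMod d) := by
  have := zne hd 4 3 (by norm_num) (by norm_num) (by norm_num)
  push_cast at this
  exact this

lemma he0 (hd : 9 ≤ d) : s((((0 : ZMod d), (0 : ZMod d)) : V d), (((1 : ZMod d), (0 : ZMod d)) : V d)) ∈ (Toric d).edgeSet := by
  rw [SimpleGraph.mem_edgeSet]
  refine ⟨fun h => ne01 hd (congrArg Prod.fst h), Or.inr (Or.inl ?_)⟩
  simp only [Prod.mk_sub_mk, Prod.mk.injEq]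
  constructor <;> ring

lemma he1 (hd : 9 ≤ d) : s((((1 : ZMod d), (0 : ZMod d)) : V d), (((2 : ZMod d), (0 : ZMod d)) : V d)) ∈ (Toric d).edgeSet := by
  rw [SimpleGraph.mem_edgeSet]
  refine ⟨fun h => ne12 hd (congrArg Prod.fst h), Or.inr (Or.inl ?_)⟩
  simp only [Prod.mk_sub_mk, Prod.mk.injEq]
  constructor <;> ring

lemma he2 (hd : 9 ≤ d) : s((((2 : ZMod d), (0 : ZMod d)) : V d), (((3 : ZMod d), (0 : ZMod d)) : V d)) ∈ (Toric d).edgeSet := by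
  rw [SimpleGraph.mem_edgeSet]
  refine ⟨fun h => ne23 hd (congrArg Prod.fst h), Or.inr (Or.inl ?_)⟩
  simp only [Prod.mk_sub_mk, Prod.mk.injEq]
  constructor <;> ring

lemma he3 (hd : 9 ≤ d) : s((((3 : ZMod d), (0 : ZMod d)) : V d), (((4 : ZMod d), (0 : ZMod d)) : V d)) ∈ (Toric d).edgeSet := by
  rw [SimpleGraph.mem_edgeSet]
  refine ⟨fun h => ne34 hd (congrArg Prod.fst h), Or.inr (Or.inl ?_)⟩
  simp only [Prod.mk_sub_mk, Prod.mk.injEq]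
  constructor <;> ring

lemma heps0 (hd : 9 ≤ d) : eps4 d ⟨s((((0 : ZMod d), (0 : ZMod d)) : V d), (((1 : ZMod d), (0 : ZMod d)) : V d)), he0 hd⟩ = 1 := by
  unfold eps4
  exact if_pos (Or.inl rfl)

lemma heps1 (hd : 9 ≤ d) : eps4 d ⟨s((((1 : ZMod d), (0 : ZMod d)) : V d), (((2 : ZMod d), (0 : ZMod d)) : V d)), he1 hd⟩ = 1 := by
  unfold eps4
  exact if_pos (Or.inr (Or.inl rfl))

lemma heps2 (hd : 9 ≤ d) : eps4 d ⟨s((((2 : ZMod d), (0 : ZMod d)) : V d), (((3 : ZMod d), (0 : ZMod d)) : V d)), he2 hd⟩ = 1 := by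
  unfold eps4
  exact if_pos (Or.inr (Or.inr (Or.inl rfl)))

lemma heps3 (hd : 9 ≤ d) : eps4 d ⟨s((((3 : ZMod d), (0 : ZMod d)) : V d), (((4 : ZMod d), (0 : ZMod d)) : V d)), he3 hd⟩ = 1 := by
  unfold eps4
  exact if_pos (Or.inr (Or.inr (Or.inr rfl)))

lemma card2_1 (hd : 9 ≤ d) :
    Nat.card {q : (Toric d).edgeSet // eps4 d q = 1 ∧
      (((1 : ZMod d), (0 : ZMod d)) : V d) ∈ (q : Sym2 (V d))} = 2 := by
  rw [Nat.card_eq_two_iff]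
  refine ⟨⟨⟨s((((0 : ZMod d), (0 : ZMod d)) : V d), (((1 : ZMod d), (0 : ZMod d)) : V d)), he0 hd⟩, heps0 hd, Sym2.mem_iff.mpr (Or.inr rfl)⟩,
    ⟨⟨s((((1 : ZMod d), (0 : ZMod d)) : V d), (((2 : ZMod d), (0 : ZMod d)) : V d)), he1 hd⟩, heps1 hd, Sym2.mem_iff.mpr (Or.inl rfl)⟩, ?_, ?_⟩
  · intro h
    have h2 : s((((0 : ZMod d), (0 : ZMod d)) : V d), (((1 : ZMod d), (0 : ZMod d)) : V d)) = s((((1 : ZMod d), (0 : ZMod d)) : V d), (((2 : ZMod d), (0 : ZMod d)) : V d)) := congrArg (fun z => z.val.val) h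
    rw [Sym2.eq_iff] at h2
    rcases h2 with ⟨h3, -⟩ | ⟨h3, -⟩
    · exact ne01 hd (congrArg Prod.fst h3)
    · exact ne02 hd (congrArg Prod.fst h3)
  · rw [Set.eq_univ_iff_forall]
    rintro ⟨⟨qv, hq⟩, heps, hmv⟩
    simp only [Set.mem_insert_iff, Set.mem_singleton_iff]
    unfold eps4 at heps
    split at heps
    · next hcond =>
      rcases hcond with h | h | h | h
      · left
        apply Subtype.ext
        apply Subtype.ext
        exact h
      · right
        apply Subtype.ext
        apply Subtype.ext
        exact h
      · exfalso
        rw [h, Sym2.mem_iff] at hmv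
        rcases hmv with hh | hh
        · exact ne12 hd (congrArg Prod.fst hh)
        · exact ne13 hd (congrArg Prod.fst hh)
      · exfalso
        rw [h, Sym2.mem_iff] at hmv
        rcases hmv with hh | hh
        · exact ne13 hd (congrArg Prod.fst hh)
        · exact ne14 hd (congrArg Prod.fst hh)
    · exact absurd heps (by decide)

lemma card2_2 (hd : 9 ≤ d) :
    Nat.card {q : (Toric d).edgeSet // eps4 d q = 1 ∧
      (((2 : ZMod d), (0 : ZMod d)) : V d) ∈ (q : Sym2 (V d))} = 2 := by
  rw [Nat.card_eq_two_iff]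
  refine ⟨⟨⟨s((((1 : ZMod d), (0 : ZMod d)) : V d), (((2 : ZMod d), (0 : ZMod d)) : V d)), he1 hd⟩, heps1 hd, Sym2.mem_iff.mpr (Or.inr rfl)⟩,
    ⟨⟨s((((2 : ZMod d), (0 : ZMod d)) : V d), (((3 : ZMod d), (0 : ZMod d)) : V d)), he2 hd⟩, heps2 hd, Sym2.mem_iff.mpr (Or.inl rfl)⟩, ?_, ?_⟩
  · intro h
    have h2 : s((((1 : ZMod d), (0 : ZMod d)) : V d), (((2 : ZMod d), (0 : ZMod d)) : V d)) = s((((2 : ZMod d), (0 : ZMod d)) : V d), (((3 : ZMod d), (0 : ZMod d)) : V d)) := congrArg (fun z => z.val.val) h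
    rw [Sym2.eq_iff] at h2
    rcases h2 with ⟨h3, -⟩ | ⟨h3, -⟩
    · exact ne12 hd (congrArg Prod.fst h3)
    · exact ne13 hd (congrArg Prod.fst h3)
  · rw [Set.eq_univ_iff_forall]
    rintro ⟨⟨qv, hq⟩, heps, hmv⟩
    simp only [Set.mem_insert_iff, Set.mem_singleton_iff]
    unfold eps4 at heps
    split at heps
    · next hcond =>
      rcases hcond with h | h | h | h
      · exfalso
        rw [h, Sym2.mem_iff] at hmv
        rcases hmv with hh | hh
        · exact ne20 hd (congrArg Prod.fst hh)
        · exact ne21 hd (congrArg Prod.fst hh)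
      · left
        apply Subtype.ext
        apply Subtype.ext
        exact h
      · right
        apply Subtype.ext
        apply Subtype.ext
        exact h
      · exfalso
        rw [h, Sym2.mem_iff] at hmv
        rcases hmv with hh | hh
        · exact ne23 hd (congrArg Prod.fst hh)
        · exact ne24 hd (congrArg Prod.fst hh)
    · exact absurd heps (by decide)

lemma card2_3 (hd : 9 ≤ d) :
    Nat.card {q : (Toric d).edgeSet // eps4 d q = 1 ∧
      (((3 : ZMod d), (0 : ZMod d)) : V d) ∈ (q : Sym2 (V d))} = 2 := by
  rw [Nat.card_eq_two_iff]
  refine ⟨⟨⟨s((((2 : ZMod d), (0 : ZMod d)) : V d), (((3 : ZMod d), (0 : ZMod d)) : V d)), he2 hd⟩, heps2 hd, Sym2.mem_iff.mpr (Or.inr rfl)⟩,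
    ⟨⟨s((((3 : ZMod d), (0 : ZMod d)) : V d), (((4 : ZMod d), (0 : ZMod d)) : V d)), he3 hd⟩, heps3 hd, Sym2.mem_iff.mpr (Or.inl rfl)⟩, ?_, ?_⟩
  · intro h
    have h2 : s((((2 : ZMod d), (0 : ZMod d)) : V d), (((3 : ZMod d), (0 : ZMod d)) : V d)) = s((((3 : ZMod d), (0 : ZMod d)) : V d), (((4 : ZMod d), (0 : ZMod d)) : V d)) := congrArg (fun z => z.val.val) h
    rw [Sym2.eq_iff] at h2
    rcases h2 with ⟨h3, -⟩ | ⟨h3, -⟩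
    · exact ne23 hd (congrArg Prod.fst h3)
    · exact ne24 hd (congrArg Prod.fst h3)
  · rw [Set.eq_univ_iff_forall]
    rintro ⟨⟨qv, hq⟩, heps, hmv⟩
    simp only [Set.mem_insert_iff, Set.mem_singleton_iff]
    unfold eps4 at heps
    split at heps
    · next hcond =>
      rcases hcond with h | h | h | h
      · exfalso
        rw [h, Sym2.mem_iff] at hmv
        rcases hmv with hh | hh
        · exact ne30 hd (congrArg Prod.fst hh)
        · exact ne31 hd (congrArg Prod.fst hh)
      · exfalso
        rw [h, Sym2.mem_iff] at hmv
        rcases hmv with hh | hh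
        · exact ne31 hd (congrArg Prod.fst hh)
        · exact ne32 hd (congrArg Prod.fst hh)
      · left
        apply Subtype.ext
        apply Subtype.ext
        exact h
      · right
        apply Subtype.ext
        apply Subtype.ext
        exact h
    · exact absurd heps (by decide)

lemma unsat_char (hd : 9 ≤ d) (v : V d) (h : synd (eps4 d) v = 1) : Uv d v := by
  by_cases hx0 : v = (((0 : ZMod d), (0 : ZMod d)) : V d)
  · exact Or.inl hx0
  by_cases hx4 : v = (((4 : ZMod d), (0 : ZMod d)) : V d)
  · exact Or.inr hx4
  exfalso
  simp only [synd] at h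
  by_cases hx1 : v = (((1 : ZMod d), (0 : ZMod d)) : V d)
  · subst hx1
    rw [card2_1 hd] at h
    exact absurd h (by decide)
  by_cases hx2 : v = (((2 : ZMod d), (0 : ZMod d)) : V d)
  · subst hx2
    rw [card2_2 hd] at h
    exact absurd h (by decide)
  by_cases hx3 : v = (((3 : ZMod d), (0 : ZMod d)) : V d)
  · subst hx3
    rw [card2_3 hd] at h
    exact absurd h (by decide)
  have hE : IsEmpty {q : (Toric d).edgeSet // eps4 d q = 1 ∧ v ∈ (q : Sym2 (V d))} := by
    constructor
    rintro ⟨⟨qv, hq⟩, heps, hmv⟩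
    unfold eps4 at heps
    split at heps
    · next hcond =>
      rcases hcond with h | h | h | h
      · rw [h, Sym2.mem_iff] at hmv
        rcases hmv with rfl | rfl
        · exact hx0 rfl
        · exact hx1 rfl
      · rw [h, Sym2.mem_iff] at hmv
        rcases hmv with rfl | rfl
        · exact hx1 rfl
        · exact hx2 rfl
      · rw [h, Sym2.mem_iff] at hmv
        rcases hmv with rfl | rfl
        · exact hx2 rfl
        · exact hx3 rfl
      · rw [h, Sym2.mem_iff] at hmv
        rcases hmv with rfl | rfl
        · exact hx3 rfl
        · exact hx4 rfl
    · exact absurd heps (by decide)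
  rw [Nat.card_of_isEmpty] at h
  exact absurd h (by decide)

end Synd
-- ===================== the common endgame =====================
section Final
variable {d : ℕ}

lemma final (hd : 9 ≤ d) (endA endB w lu₀ : List (V d)) (m k T : ℕ)
    (hm : 2 ≤ m)
    (hlenA : endA.length = m + 2) (hlenB : endB.length = m + 2)
    (hwwA : ∀ j : ℕ, j + 2 < endA.length → endA[j]? ≠ endA[j+2]?)
    (hchB : endB.Chain' (Toric d).Adj)
    (hwwB : ∀ j : ℕ, j + 2 < endB.length → endB[j]? ≠ endB[j+2]?)
    (hABget : ∀ jj, jj < m → endA.getD jj 0 = endB.getD jj 0)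
    (hgetm : endA.getD m 0 ≠ endB.getD m 0)
    (uA : Uv d (vcheck endA)) (uB : Uv d (vcheck endB)) (uw : Uv d (vcheck w))
    (hw1 : 1 ≤ w.length)
    (hch0 : lu₀.Chain' (Toric d).Adj) (hchw : w.Chain' (Toric d).Adj)
    (hk1 : 1 ≤ k) (hk0 : k ≤ lu₀.length) (hkw : k ≤ w.length)
    (htk : lu₀.take k = w.take k)
    (hup : 3 ≤ lu₀.length - k)
    (hidx : ∀ j, j ≤ 3 → lu₀.getD (lu₀.length - 1 - j) 0 = endA.getD (m + 1 - j) 0)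
    (hT : T = (lu₀.length - k) + (w.length - k))
    (hT3 : 3 ≤ T) : 6 ≤ T := by
  by_contra h6
  push_neg at h6
  set W := wkf lu₀ w k with hW
  have hadj : ∀ j, j + 1 ≤ T → (Toric d).Adj (W j) (W (j+1)) := by
    intro j hj
    exact wkf_adj lu₀ w k hch0 hchw htk hk1 hk0 hkw j (by omega)
  have hWT : W T = vcheck w := by
    rw [hT, hW]
    rw [wkf_last lu₀ w k hk1 hk0 hkw htk]
    rw [vcheck_eq_getD w (by intro hh; rw [hh] at hw1; simp at hw1)]
  have hW0 : W 0 = endA.getD (m+1) 0 := by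
    rw [hW, wkf_zero]
    have := hidx 0 (by omega)
    simpa using this
  have hW1 : W 1 = endA.getD m 0 := by
    rw [hW, wkf_low lu₀ w k 1 (by omega)]
    have := hidx 1 (by omega)
    simpa using this
  have hW2 : W 2 = endA.getD (m-1) 0 := by
    rw [hW, wkf_low lu₀ w k 2 (by omega)]
    have := hidx 2 (by omega)
    rw [show m + 1 - 2 = m - 1 from by omega] at this
    exact this
  have hW3 : W 3 = endA.getD (m-2) 0 := by
    rw [hW, wkf_low lu₀ w k 3 (by omega)]
    have := hidx 3 (by omega)
    rw [show m + 1 - 3 = m - 2 from by omega] at this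
    exact this
  have hvcA : vcheck endA = endA.getD (m+1) 0 := by
    rw [vcheck_eq_getD endA (by intro hh; rw [hh] at hlenA; simp at hlenA), hlenA]
    congr 1
  have hvcB : vcheck endB = endB.getD (m+1) 0 := by
    rw [vcheck_eq_getD endB (by intro hh; rw [hh] at hlenB; simp at hlenB), hlenB]
    congr 1
  have uW0 : Uv d (W 0) := by rw [hW0, ← hvcA]; exact uA
  -- the Λ companion branch
  have hy : (Toric d).Adj (W 2) (endB.getD m 0) := by
    rw [hW2, hABget (m-1) (by omega)]
    have := chain_getD hchB (m-1) (by omega)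
    rwa [show m - 1 + 1 = m by omega] at this
  have hyy : (Toric d).Adj (endB.getD m 0) (endB.getD (m+1) 0) :=
    chain_getD hchB m (by omega)
  have hy2 : Uv d (endB.getD (m+1) 0) := by rw [← hvcB]; exact uB
  have ny1 : endB.getD m 0 ≠ W 1 := by rw [hW1]; exact fun hh => hgetm hh.symm
  have ny3 : endB.getD m 0 ≠ W 3 := by
    rw [hW3, hABget (m-2) (by omega)]
    have := ww_getD hwwB (m-2) (by omega)
    rw [show m - 2 + 2 = m by omega] at this
    exact fun hh => this hh.symm
  have hTc : T = 3 ∨ T = 4 ∨ T = 5 := by omega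
  rcases hTc with rfl | rfl | rfl
  · have e3 : W 3 = vcheck w := hWT
    exact CL3 hd (hadj 0 (by omega)) (hadj 1 (by omega)) (hadj 2 (by omega))
      uW0 (by rw [e3]; exact uw)
  · have e4 : W 4 = vcheck w := hWT
    have n02 : W 0 ≠ W 2 := by
      rw [hW0, hW2]
      have := ww_getD hwwA (m-1) (by omega)
      rw [show m - 1 + 2 = m + 1 by omega] at this
      exact fun hh => this hh.symm
    have n13 : W 1 ≠ W 3 := by
      rw [hW1, hW3]
      have := ww_getD hwwA (m-2) (by omega)
      rw [show m - 2 + 2 = m by omega] at this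
      exact fun hh => this hh.symm
    exact CL4 hd (hadj 0 (by omega)) (hadj 1 (by omega)) (hadj 2 (by omega))
      (hadj 3 (by omega)) hy hyy uW0 (by rw [e4]; exact uw) hy2 n02 n13 ny1 ny3
  · have e5 : W 5 = vcheck w := hWT
    exact CL5 hd (hadj 0 (by omega)) (hadj 1 (by omega)) (hadj 2 (by omega))
      (hadj 3 (by omega)) (hadj 4 (by omega)) hy hyy uW0 (by rw [e5]; exact uw)
      hy2 ny1 ny3

end Final
section MainAux
variable {d : ℕ}

lemma take_one_eq (l : List (V d)) (h : 1 ≤ l.length) : l.take 1 = [l.getD 0 0] := by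
  match l, h with
  | x :: rest, _ => simp [List.getD]

end MainAux

/-- **Lemma (Λ-link isolation for `s⁴`).** -/
theorem lambda_link_isolation (d : ℕ) (hd : 9 ≤ d) (c b : V d)
    (hcb : (Toric d).Adj c b) (hc : synd (eps4 d) c = 1) (i : ℕ)
    (L : Link d c b i (synd (eps4 d))) (hL : L.IsLambda) :
    ∀ w : List (V d), IsTreeVertex d c b i w →
      ¬ (L.endA.take (cpl L.endA L.endB) <+: w) →
      synd (eps4 d) (vcheck w) = 1 →
      treeDist L.endA w = treeDist L.endB w ∧ 6 ≤ treeDist L.endA w := by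
  intro w hw hnp hws
  obtain ⟨hP, hlen4, hroot, hABlen⟩ := hL
  have uA : Uv d (vcheck L.endA) := unsat_char hd _ (L.hAu hP.1)
  have uB : Uv d (vcheck L.endB) := unsat_char hd _ (L.hBu hP.2)
  have uw : Uv d (vcheck w) := unsat_char hd _ hws
  obtain ⟨⟨hchA, hwwA⟩, hstA, hA2, hAi⟩ := hP.1
  obtain ⟨⟨hchB, hwwB⟩, hstB, hB2, hBi⟩ := hP.2
  obtain ⟨⟨hchW, hwwW⟩, hstW, hW2, hWi⟩ := hw
  have hsA : stripD i L.endA = L.endA := by rw [stripD, if_neg (by omega)]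
  have hsB : stripD i L.endB = L.endB := by rw [stripD, if_neg (by omega)]
  have htd4 : treeDist L.endA L.endB = 4 := by
    have h4 := hlen4
    rw [Link.len, hsA, hsB, if_neg (by omega), if_neg (by omega)] at h4
    omega
  have htake2 : L.endA.take 2 = L.endB.take 2 := by
    by_contra hne
    apply hroot
    unfold Link.on
    rw [hsA, hsB]
    left
    rw [OnPathVV, if_neg hne]
    right
    rfl
  set m := cpl L.endA L.endB with hm_def
  have hmA : m ≤ L.endA.length := cpl_le_left _ _
  have hmB : m ≤ L.endB.length := cpl_le_right _ _
  have hm2 : 2 ≤ m := le_cpl_of_take_eq 2 _ _ hA2 htake2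
  have htdval : L.endA.length + L.endB.length - 2 * m = 4 := by
    rw [treeDist, if_pos htake2] at htd4
    exact htd4
  have hlA : L.endA.length = m + 2 := by omega
  have hlB : L.endB.length = m + 2 := by omega
  have htakeAB : L.endA.take m = L.endB.take m := take_cpl_eq m _ _ le_rfl
  have hABget : ∀ jj, jj < m → L.endA.getD jj 0 = L.endB.getD jj 0 :=
    fun jj hjj => getD_eq_of_lt_cpl jj _ _ hjj
  have hgetm : L.endA.getD m 0 ≠ L.endB.getD m 0 :=
    getD_ne_cpl _ _ (by omega) (by omega)
  by_cases hor : L.endA.take 2 = w.take 2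
  · -- same orientation of the root edge
    set k := cpl L.endA w with hk_def
    have hk2 : 2 ≤ k := le_cpl_of_take_eq 2 _ _ hA2 hor
    have hkA : k ≤ L.endA.length := cpl_le_left _ _
    have hkW : k ≤ w.length := cpl_le_right _ _
    have hkm : k < m := by
      rcases Nat.lt_or_ge k m with h | hge
      · exact h
      exfalso
      apply hnp
      rw [List.prefix_iff_eq_take, List.length_take]
      rw [show min m L.endA.length = m by omega]
      exact (take_cpl_eq m L.endA w (by omega)).symm ▸
        (take_cpl_eq m L.endA w (by omega))
    have htkAw : L.endA.take k = w.take k := take_cpl_eq k _ _ le_rfl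
    have hcplBw : cpl L.endB w = k := by
      have hge : k ≤ cpl L.endB w := by
        apply le_cpl_of_take_eq k _ _ (by omega)
        exact (take_cpl_eq k L.endA L.endB (by omega)).symm.trans htkAw
      have hle : cpl L.endB w ≤ k := by
        by_contra hgt
        push_neg at hgt
        have h1 : k + 1 ≤ w.length := le_trans hgt (cpl_le_right _ _)
        have h2 : L.endA.take (k+1) = w.take (k+1) :=
          (take_cpl_eq (k+1) L.endA L.endB (by omega)).trans
            (take_cpl_eq (k+1) L.endB w hgt)
        have := le_cpl_of_take_eq (k+1) L.endA w (by omega) h2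
        omega
      omega
    have htdAw : treeDist L.endA w = L.endA.length + w.length - 2 * k := by
      rw [treeDist, if_pos hor]
    have htdBw : treeDist L.endB w = L.endB.length + w.length - 2 * k := by
      rw [treeDist, if_pos (htake2 ▸ hor), hcplBw]
    refine ⟨by rw [htdAw, htdBw, hlA, hlB], ?_⟩
    rw [htdAw]
    apply final hd L.endA L.endB w L.endA m k _ hm2 hlA hlB hwwA hchB hwwB
      hABget hgetm uA uB uw (by omega) hchA hchW (by omega) hkA hkW htkAw
      (by omega) (fun j hj => by rw [hlA, show m + 2 - 1 - j = m + 1 - j from by omega]) (by omega) (by omega)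
  · -- opposite orientations of the root edge
    have ht2A := take_two_eq L.endA hA2
    have ht2W := take_two_eq w hW2
    have hrev : L.endA.getD 0 0 = w.getD 1 0 ∧ L.endA.getD 1 0 = w.getD 0 0 := by
      rcases hstA with h1 | h1 <;> rcases hstW with h2 | h2
      · exact absurd (h1.trans h2.symm) hor
      · have e1 := ht2A.symm.trans h1
        have e2 := ht2W.symm.trans h2
        simp only [List.cons.injEq, and_true] at e1 e2
        exact ⟨e1.1.trans e2.2.symm, e1.2.trans e2.1.symm⟩
      · have e1 := ht2A.symm.trans h1
        have e2 := ht2W.symm.trans h2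
        simp only [List.cons.injEq, and_true] at e1 e2
        exact ⟨e1.1.trans e2.2.symm, e1.2.trans e2.1.symm⟩
      · exact absurd (h1.trans h2.symm) hor
    set lu' := w.getD 0 0 :: L.endA with hlu'
    have hlu'len : lu'.length = m + 3 := by rw [hlu']; simp [hlA]
    have hch' : lu'.Chain' (Toric d).Adj := by
      rw [hlu']
      apply List.IsChain.cons hchA
      intro y hy
      rw [List.head?_eq_getElem?] at hy
      rw [List.getElem?_eq_getElem (by omega : 0 < L.endA.length)] at hy
      simp only [Option.mem_some_iff] at hy
      have h0 : L.endA.getD 0 0 = L.endA[0] := List.getD_eq_getElem _ _ (by omega)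
      rw [← hy, ← h0, ← hrev.2]
      have := chain_getD hchA 0 (by omega)
      exact ((Toric d).adj_symm this)
    have htk' : lu'.take 2 = w.take 2 := by
      rw [take_two_eq w hW2, hlu']
      simp only [List.take_succ_cons]
      rw [take_one_eq L.endA (by omega), hrev.1]
    have hidx' : ∀ j, j ≤ 3 → lu'.getD (lu'.length - 1 - j) 0 = L.endA.getD (m + 1 - j) 0 := by
      intro j hj
      rw [hlu'len, hlu']
      rw [show m + 3 - 1 - j = (m + 1 - j) + 1 by omega]
      rw [List.getD_cons_succ]
    have htdAw : treeDist L.endA w = L.endA.length + w.length - 3 := by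
      rw [treeDist, if_neg hor]
    have htdBw : treeDist L.endB w = L.endB.length + w.length - 3 := by
      rw [treeDist, if_neg (htake2 ▸ hor)]
    refine ⟨by rw [htdAw, htdBw, hlA, hlB], ?_⟩
    rw [htdAw]
    apply final hd L.endA L.endB w lu' m 2 _ hm2 hlA hlB hwwA hchB hwwB
      hABget hgetm uA uB uw (by omega) hch' hchW (by omega) (by omega) (by omega)
      htk' (by omega) hidx' (by omega) (by omega)

end ToricMS
end

section
/- Claim (weight-2 degenerate errors are undecodable by MS). Let d ≥ 5 and let e be a degenerate error of weight 2 on the toric lattice T_d; up to translations and rotations, e consists either of two edges of a plaquette meeting at a common corner, or of two opposite edges of a plaquette. Then the syndrome s = He is never decoded by MS: by the mirror symmetry of the decoding exchanging the two qubits of e with the two qubits of the other minimal-weight explanation, the symmetric qubit pairs have equal a posteriori values APP at every iteration, and consequently H ê_i ≠ s for every iteration i ≥ 1. -/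
namespace ToricMS

variable {d : ℕ} {a b : V d} {i : ℕ} {s : V d → ZMod 2}

/-! ### Auxiliary development -/

section Aux

variable {d : ℕ}

/-- Classical indicator with values in `ZMod 2`. -/
noncomputable def chi (p : Prop) : ZMod 2 := @ite _ p (Classical.propDecidable _) 1 0

lemma chi_pos {p : Prop} (h : p) : chi p = 1 := by simp [chi, h]

lemma chi_neg {p : Prop} (h : ¬ p) : chi p = 0 := by simp [chi, h]

lemma chi_congr {p q : Prop} (h : p ↔ q) : chi p = chi q := by
  by_cases hp : p
  · rw [chi_pos hp, chi_pos (h.mp hp)]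
  · rw [chi_neg hp, chi_neg (fun hq => hp (h.mpr hq))]

lemma chi_eq_one_iff {p : Prop} : chi p = 1 ↔ p := by
  constructor
  · intro h
    by_contra hp
    rw [chi_neg hp] at h
    exact absurd h (by decide)
  · exact chi_pos

lemma or_of_chi_add {p q : Prop} (h : chi p + chi q = 1) : p ∨ q := by
  by_cases hp : p
  · exact Or.inl hp
  by_cases hq : q
  · exact Or.inr hq
  rw [chi_neg hp, chi_neg hq] at h
  exact absurd h (by decide)

lemma chi_or {x y v : V d} (h : x ≠ y) :
    chi (v = x ∨ v = y) = chi (v = x) + chi (v = y) := by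
  by_cases h1 : v = x
  · subst h1
    rw [chi_pos (Or.inl rfl), chi_pos rfl, chi_neg h]
    decide
  by_cases h2 : v = y
  · subst h2
    rw [chi_pos (Or.inr rfl), chi_pos rfl, chi_neg h1]
    decide
  · rw [chi_neg (by tauto), chi_neg h1, chi_neg h2]
    decide

lemma toric_adj {u v : V d} :
    (Toric d).Adj u v ↔ u ≠ v ∧
      (u - v = (1, 0) ∨ u - v = (-1, 0) ∨ u - v = (0, 1) ∨ u - v = (0, -1)) :=
  Iff.rfl

/-- A mirror symmetry of the toric lattice. -/
structure Mirror (d : ℕ) where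
  σ : V d → V d
  invol : Function.Involutive σ
  adj : ∀ u v, (Toric d).Adj (σ u) (σ v) ↔ (Toric d).Adj u v
  nofix : ∀ u v, (Toric d).Adj u v → σ u = u → σ v ≠ v

lemma Mirror.inj (M : Mirror d) : Function.Injective M.σ := M.invol.injective

lemma one_ne_zero' (hd : 5 ≤ d) : (1 : ZMod d) ≠ 0 := by
  haveI : NeZero d := ⟨by omega⟩
  haveI : Fact (1 < d) := ⟨by omega⟩
  exact one_ne_zero

/-- The antidiagonal mirror `(x, y) ↦ (k - y, k - x)`. -/
def antiM (hd : 5 ≤ d) (k : ZMod d) : Mirror d where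
  σ := fun v => (k - v.2, k - v.1)
  invol := fun v => by simp
  adj := by
    intro u v
    rw [toric_adj, toric_adj]
    constructor
    · rintro ⟨h1, h2⟩
      refine ⟨fun h => h1 (by rw [h]), ?_⟩
      simp only [Prod.mk_sub_mk, Prod.mk.injEq, Prod.ext_iff, Prod.fst_sub, Prod.snd_sub] at h2 ⊢
      rcases h2 with ⟨ha, hb⟩ | ⟨ha, hb⟩ | ⟨ha, hb⟩ | ⟨ha, hb⟩
      · exact Or.inr (Or.inr (Or.inr ⟨by linear_combination -hb, by linear_combination -ha⟩))
      · exact Or.inr (Or.inr (Or.inl ⟨by linear_combination -hb, by linear_combination -ha⟩))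
      · exact Or.inr (Or.inl ⟨by linear_combination -hb, by linear_combination -ha⟩)
      · exact Or.inl ⟨by linear_combination -hb, by linear_combination -ha⟩
    · rintro ⟨h1, h2⟩
      constructor
      · intro h
        apply h1
        have h1' : k - u.2 = k - v.2 := congrArg Prod.fst h
        have h2' : k - u.1 = k - v.1 := congrArg Prod.snd h
        exact Prod.ext (by linear_combination -h2') (by linear_combination -h1')
      · simp only [Prod.mk_sub_mk, Prod.mk.injEq, Prod.ext_iff, Prod.fst_sub, Prod.snd_sub] at h2 ⊢
        rcases h2 with ⟨ha, hb⟩ | ⟨ha, hb⟩ | ⟨ha, hb⟩ | ⟨ha, hb⟩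
        · exact Or.inr (Or.inr (Or.inr ⟨by linear_combination -hb, by linear_combination -ha⟩))
        · exact Or.inr (Or.inr (Or.inl ⟨by linear_combination -hb, by linear_combination -ha⟩))
        · exact Or.inr (Or.inl ⟨by linear_combination -hb, by linear_combination -ha⟩)
        · exact Or.inl ⟨by linear_combination -hb, by linear_combination -ha⟩
  nofix := by
    intro u v hadj hu hv
    have h1 : (1 : ZMod d) ≠ 0 := one_ne_zero' hd
    have hu1 : k - u.2 = u.1 := congrArg Prod.fst hu
    have hv1 : k - v.2 = v.1 := congrArg Prod.fst hv
    rw [toric_adj] at hadj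
    obtain ⟨-, h⟩ := hadj
    simp only [Prod.ext_iff, Prod.fst_sub, Prod.snd_sub] at h
    rcases h with ⟨ha, hb⟩ | ⟨ha, hb⟩ | ⟨ha, hb⟩ | ⟨ha, hb⟩ <;>
      exact h1 (by first
        | linear_combination -ha - hb - hu1 + hv1
        | linear_combination ha + hb + hu1 - hv1)
  
/-- The main-diagonal mirror `(x, y) ↦ (y + m, x - m)`. -/
def mainM (hd : 5 ≤ d) (m : ZMod d) : Mirror d where
  σ := fun v => (v.2 + m, v.1 - m)
  invol := fun v => by simp
  adj := by
    intro u v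
    rw [toric_adj, toric_adj]
    constructor
    · rintro ⟨h1, h2⟩
      refine ⟨fun h => h1 (by rw [h]), ?_⟩
      simp only [Prod.mk_sub_mk, Prod.mk.injEq, Prod.ext_iff, Prod.fst_sub, Prod.snd_sub] at h2 ⊢
      rcases h2 with ⟨ha, hb⟩ | ⟨ha, hb⟩ | ⟨ha, hb⟩ | ⟨ha, hb⟩
      · exact Or.inr (Or.inr (Or.inl ⟨by linear_combination hb, by linear_combination ha⟩))
      · exact Or.inr (Or.inr (Or.inr ⟨by linear_combination hb, by linear_combination ha⟩))
      · exact Or.inl ⟨by linear_combination hb, by linear_combination ha⟩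
      · exact Or.inr (Or.inl ⟨by linear_combination hb, by linear_combination ha⟩)
    · rintro ⟨h1, h2⟩
      constructor
      · intro h
        apply h1
        have h1' : u.2 + m = v.2 + m := congrArg Prod.fst h
        have h2' : u.1 - m = v.1 - m := congrArg Prod.snd h
        exact Prod.ext (by linear_combination h2') (by linear_combination h1')
      · simp only [Prod.mk_sub_mk, Prod.mk.injEq, Prod.ext_iff, Prod.fst_sub, Prod.snd_sub] at h2 ⊢
        rcases h2 with ⟨ha, hb⟩ | ⟨ha, hb⟩ | ⟨ha, hb⟩ | ⟨ha, hb⟩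
        · exact Or.inr (Or.inr (Or.inl ⟨by linear_combination hb, by linear_combination ha⟩))
        · exact Or.inr (Or.inr (Or.inr ⟨by linear_combination hb, by linear_combination ha⟩))
        · exact Or.inl ⟨by linear_combination hb, by linear_combination ha⟩
        · exact Or.inr (Or.inl ⟨by linear_combination hb, by linear_combination ha⟩)
  nofix := by
    intro u v hadj hu hv
    have h1 : (1 : ZMod d) ≠ 0 := one_ne_zero' hd
    have hu1 : u.2 + m = u.1 := congrArg Prod.fst hu
    have hv1 : v.2 + m = v.1 := congrArg Prod.fst hv
    rw [toric_adj] at hadj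
    obtain ⟨-, h⟩ := hadj
    simp only [Prod.ext_iff, Prod.fst_sub, Prod.snd_sub] at h
    rcases h with ⟨ha, hb⟩ | ⟨ha, hb⟩ | ⟨ha, hb⟩ | ⟨ha, hb⟩ <;>
      exact h1 (by first
        | linear_combination -ha + hb - hu1 + hv1
        | linear_combination ha - hb + hu1 - hv1)

lemma antiM_σ (hd : 5 ≤ d) (k : ZMod d) (v : V d) :
    (antiM hd k).σ v = (k - v.2, k - v.1) := rfl

lemma mainM_σ (hd : 5 ≤ d) (m : ZMod d) (v : V d) :
    (mainM hd m).σ v = (v.2 + m, v.1 - m) := rfl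

end Aux
section Equivariance

variable {d : ℕ}

lemma Mirror.map_map (M : Mirror d) (l : List (V d)) :
    List.map M.σ (List.map M.σ l) = l := by
  rw [List.map_map]
  have h : M.σ ∘ M.σ = id := funext M.invol
  rw [h, List.map_id]

lemma Mirror.map_eq_iff (M : Mirror d) {l l' : List (V d)} :
    List.map M.σ l = List.map M.σ l' ↔ l = l' :=
  (List.map_injective_iff.mpr M.inj).eq_iff

lemma isWWR_map (M : Mirror d) (l : List (V d)) :
    IsWWR d (List.map M.σ l) ↔ IsWWR d l := by
  unfold IsWWR
  apply and_congr
  · simp only [List.Chain', List.isChain_map]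
    constructor
    · intro h
      exact h.imp fun a b hab => (M.adj a b).mp hab
    · intro h
      exact h.imp fun a b hab => (M.adj a b).mpr hab
  · simp only [List.length_map, List.getElem?_map]
    constructor
    · intro h j hj
      intro heq
      exact h j hj (congrArg (Option.map M.σ) heq)
    · intro h j hj
      exact fun heq => h j hj (Option.map_injective M.inj heq)

lemma map_pair (M : Mirror d) (a b : V d) :
    List.map M.σ [a, b] = [M.σ a, M.σ b] := rfl

lemma map_eq_pair_iff (M : Mirror d) {l : List (V d)} {a b : V d} :
    List.map M.σ l = [M.σ a, M.σ b] ↔ l = [a, b] := by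
  rw [← map_pair, M.map_eq_iff]

lemma startsQ_map (M : Mirror d) (a b : V d) (l : List (V d)) :
    StartsQ d (M.σ a) (M.σ b) (List.map M.σ l) ↔ StartsQ d a b l := by
  unfold StartsQ
  rw [← List.map_take]
  rw [map_eq_pair_iff, show [M.σ b, M.σ a] = List.map M.σ [b, a] from rfl, M.map_eq_iff]

lemma isTreeVertex_map (M : Mirror d) (a b : V d) (i : ℕ) (l : List (V d)) :
    IsTreeVertex d (M.σ a) (M.σ b) i (List.map M.σ l) ↔ IsTreeVertex d a b i l := by
  unfold IsTreeVertex
  rw [isWWR_map, startsQ_map, List.length_map]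

lemma isTreeEdge_map (M : Mirror d) (a b : V d) (i : ℕ) (l : List (V d)) :
    IsTreeEdge d (M.σ a) (M.σ b) i (List.map M.σ l) ↔ IsTreeEdge d a b i l := by
  unfold IsTreeEdge
  rw [isWWR_map, startsQ_map, List.length_map, map_eq_pair_iff]

lemma isTreeEdge_map' (M : Mirror d) (a b : V d) (i : ℕ) (l : List (V d)) :
    IsTreeEdge d (M.σ a) (M.σ b) i l ↔ IsTreeEdge d a b i (List.map M.σ l) := by
  have h := isTreeEdge_map M a b i (List.map M.σ l)
  rw [M.map_map] at h
  exact h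

lemma isTreeVertex_map' (M : Mirror d) (a b : V d) (i : ℕ) (l : List (V d)) :
    IsTreeVertex d (M.σ a) (M.σ b) i l ↔ IsTreeVertex d a b i (List.map M.σ l) := by
  have h := isTreeVertex_map M a b i (List.map M.σ l)
  rw [M.map_map] at h
  exact h

lemma vcheck_map (M : Mirror d) {l : List (V d)} (h : l ≠ []) :
    vcheck (List.map M.σ l) = M.σ (vcheck l) := by
  unfold vcheck
  rw [List.getLastD_eq_getLast?, List.getLastD_eq_getLast?, List.getLast?_map]
  obtain ⟨x, hx⟩ := Option.isSome_iff_exists.mp (List.getLast?_isSome.mpr h)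
  rw [hx]
  rfl

lemma incidentVE_map (M : Mirror d) (lv le : List (V d)) :
    IncidentVE (List.map M.σ lv) (List.map M.σ le) ↔ IncidentVE lv le := by
  unfold IncidentVE
  rw [← List.map_dropLast, ← List.map_reverse, List.length_map,
    M.map_eq_iff, M.map_eq_iff, M.map_eq_iff]

lemma incidentVE_map' (M : Mirror d) (lv le : List (V d)) :
    IncidentVE lv le ↔ IncidentVE (List.map M.σ lv) (List.map M.σ le) :=
  (incidentVE_map M lv le).symm

lemma Mirror.card_map (M : Mirror d) (P Q : List (V d) → Prop)
    (h : ∀ l, P l ↔ Q (List.map M.σ l)) :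
    Nat.card {l : List (V d) // P l} = Nat.card {l : List (V d) // Q l} :=
  Nat.card_congr
    { toFun := fun x => ⟨List.map M.σ x.1, (h _).mp x.2⟩
      invFun := fun y => ⟨List.map M.σ y.1, (h _).mpr (by rw [M.map_map]; exact y.2)⟩
      left_inv := fun x => Subtype.ext (M.map_map x.1)
      right_inv := fun y => Subtype.ext (M.map_map y.1) }

lemma isConfig_map (M : Mirror d) {a b : V d} {i : ℕ} {s : V d → ZMod 2}
    {C : List (V d) → ZMod 2} (hs : ∀ v, s (M.σ v) = s v)
    (h : IsConfig d a b i s C) :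
    IsConfig d (M.σ a) (M.σ b) i s (fun l => C (List.map M.σ l)) := by
  intro lv hlv
  have hlv0 : IsTreeVertex d a b i (List.map M.σ lv) := by
    have h' := isTreeVertex_map M a b i (List.map M.σ lv)
    rw [M.map_map] at h'
    exact h'.mp hlv
  have hcard := M.card_map
      (fun le => IsTreeEdge d (M.σ a) (M.σ b) i le ∧ IncidentVE lv le ∧
        C (List.map M.σ le) = 1)
      (fun le => IsTreeEdge d a b i le ∧ IncidentVE (List.map M.σ lv) le ∧ C le = 1)
      (fun le => by
        constructor
        · rintro ⟨h1, h2, h3⟩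
          exact ⟨(isTreeEdge_map' M a b i le).mp h1,
            (incidentVE_map' M lv le).mp h2, h3⟩
        · rintro ⟨h1, h2, h3⟩
          exact ⟨(isTreeEdge_map' M a b i le).mpr h1,
            (incidentVE_map' M lv le).mpr h2, h3⟩)
  rw [hcard, h _ hlv0]
  have hne : lv ≠ [] := by
    intro hnil
    rw [hnil] at hlv
    have := hlv.2.2.1
    simp at this
  rw [vcheck_map M hne, hs]

lemma cweight_map (M : Mirror d) (a b : V d) (i : ℕ) (C D : List (V d) → ZMod 2)
    (hCD : ∀ l, D l = C (List.map M.σ l)) :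
    cweight d (M.σ a) (M.σ b) i C = cweight d a b i D := by
  unfold cweight
  refine M.card_map _ _ (fun l => ?_)
  have hDl : D (List.map M.σ l) = C l := by
    rw [hCD (List.map M.σ l), M.map_map]
  constructor
  · rintro ⟨h1, h2⟩
    exact ⟨(isTreeEdge_map' M a b i l).mp h1, by rw [hDl]; exact h2⟩
  · rintro ⟨h1, h2⟩
    exact ⟨(isTreeEdge_map' M a b i l).mpr h1, by rw [hDl] at h2; exact h2⟩

lemma minW_map (M : Mirror d) {s : V d → ZMod 2} (hs : ∀ v, s (M.σ v) = s v)
    (a b : V d) (i : ℕ) (r : ZMod 2) :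
    minW d (M.σ a) (M.σ b) i s r = minW d a b i s r := by
  unfold minW
  congr 1
  ext n
  constructor
  · rintro ⟨C, hC, hr, hw⟩
    refine ⟨fun l => C (List.map M.σ l), ?_, ?_, ?_⟩
    · have h' := isConfig_map M hs hC
      rw [M.invol a, M.invol b] at h'
      exact h'
    · show C (List.map M.σ [a, b]) = r
      rw [map_pair]
      exact hr
    · rw [← hw, cweight_map M a b i C (fun l => C (List.map M.σ l)) (fun l => rfl)]
  · rintro ⟨C, hC, hr, hw⟩
    refine ⟨fun l => C (List.map M.σ l), isConfig_map M hs hC, ?_, ?_⟩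
    · show C (List.map M.σ [M.σ a, M.σ b]) = r
      have : List.map M.σ [M.σ a, M.σ b] = [a, b] := by
        simp [M.invol a, M.invol b]
      rw [this]
      exact hr
    · rw [← hw]
      exact cweight_map M a b i (fun l => C (List.map M.σ l)) C
        (fun l => by
          show C l = C (List.map M.σ (List.map M.σ l))
          rw [M.map_map])

lemma APPo_map (M : Mirror d) {s : V d → ZMod 2} (hs : ∀ v, s (M.σ v) = s v)
    (i : ℕ) (a b : V d) :
    APPo d s i (M.σ a) (M.σ b) = APPo d s i a b := by
  unfold APPo
  rw [minW_map M hs, minW_map M hs]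

lemma APP_map (M : Mirror d) {s : V d → ZMod 2} (hs : ∀ v, s (M.σ v) = s v)
    (i : ℕ) (z : Sym2 (V d)) :
    APP d s i (Sym2.map M.σ z) = APP d s i z := by
  induction z using Sym2.ind with
  | _ x y =>
    rw [Sym2.map_pair_eq]
    unfold APP
    rw [Sym2.lift_mk, Sym2.lift_mk]
    show min (APPo d s i (M.σ x) (M.σ y)) (APPo d s i (M.σ y) (M.σ x)) = _
    rw [APPo_map M hs, APPo_map M hs]

lemma mapEdge_mem (M : Mirror d) {q : Sym2 (V d)} (hq : q ∈ (Toric d).edgeSet) :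
    Sym2.map M.σ q ∈ (Toric d).edgeSet := by
  induction q using Sym2.ind with
  | _ x y =>
    rw [Sym2.map_pair_eq]
    rw [SimpleGraph.mem_edgeSet] at hq ⊢
    exact (M.adj x y).mpr hq

lemma sym2_map_map (M : Mirror d) (q : Sym2 (V d)) :
    Sym2.map M.σ (Sym2.map M.σ q) = q := by
  rw [Sym2.map_map]
  have h : M.σ ∘ M.σ = id := funext M.invol
  rw [h, Sym2.map_id]
  rfl

lemma natCard_zmod2_invol {X : Type} [Finite X] (j : X → X)
    (hj : ∀ x, j (j x) = x) (hfix : ∀ x, j x ≠ x) :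
    ((Nat.card X : ZMod 2)) = 0 := by
  classical
  haveI := Fintype.ofFinite X
  rw [Nat.card_eq_fintype_card, ← Finset.card_univ, Finset.card_eq_sum_ones]
  push_cast
  exact Finset.sum_involution (fun x _ => j x) (fun x _ => by decide)
    (fun x _ _ => hfix x) (fun x _ => Finset.mem_univ _) (fun x _ => hj x)

/-- Key lemma: if a mirror fixes the syndrome and fixes a vertex `a` with
`s a = 1`, then the MS hard decision never satisfies the syndrome. -/
lemma synd_hatE_ne (hd : 5 ≤ d) (M : Mirror d) (s : V d → ZMod 2)
    (hs : ∀ v, s (M.σ v) = s v) (a : V d) (ha : M.σ a = a) (hsa : s a = 1)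
    (i : ℕ) : synd (hatE d s i) ≠ s := by
  haveI : NeZero d := ⟨by omega⟩
  intro hcontra
  have h0 : synd (hatE d s i) a = s a := congrFun hcontra a
  rw [hsa] at h0
  unfold synd at h0
  set eh := hatE d s i with heh
  have hval : ∀ (q : (Toric d).edgeSet) (hq' : Sym2.map M.σ q.1 ∈ (Toric d).edgeSet),
      eh ⟨Sym2.map M.σ q.1, hq'⟩ = eh q := by
    intro q hq'
    rw [heh]
    show (if APP d s i (Sym2.map M.σ q.1) < 0 then (1 : ZMod 2) else 0) = _
    rw [APP_map M hs]
    rfl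
  set X := {q : (Toric d).edgeSet // eh q = 1 ∧ a ∈ (q : Sym2 (V d))} with hX
  let j : X → X := fun x => ⟨⟨Sym2.map M.σ x.1.1, mapEdge_mem M x.1.2⟩,
      by rw [hval x.1 (mapEdge_mem M x.1.2)]; exact x.2.1,
      Sym2.mem_map.mpr ⟨a, x.2.2, ha⟩⟩
  have hjj : ∀ x, j (j x) = x := by
    intro x
    apply Subtype.ext
    apply Subtype.ext
    exact sym2_map_map M x.1.1
  have hjfix : ∀ x, j x ≠ x := by
    intro x hfx
    have hq' : Sym2.map M.σ x.1.1 = x.1.1 :=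
      congrArg (fun y : X => y.1.1) hfx
    obtain ⟨n, hn⟩ := Sym2.mem_iff_exists.mp x.2.2
    have hadj : (Toric d).Adj a n := by
      have := x.1.2
      rw [hn, SimpleGraph.mem_edgeSet] at this
      exact this
    rw [hn, Sym2.map_pair_eq, ha] at hq'
    have : M.σ n = n := by
      rcases Sym2.eq_iff.mp hq' with ⟨-, h2⟩ | ⟨h2, h3⟩
      · exact h2
      · exact absurd h2 hadj.ne
    exact M.nofix a n hadj ha this
  rw [natCard_zmod2_invol j hjj hjfix] at h0
  exact absurd h0 (by decide)

end Equivariance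
section Syndrome

variable {d : ℕ}

lemma zmod2_cases (z : ZMod 2) : z = 0 ∨ z = 1 := by revert z; decide

lemma err_eq {e e' : (Toric d).edgeSet → ZMod 2}
    (h : ∀ q, e' q = 1 ↔ e q = 1) : e' = e := by
  funext q
  rcases zmod2_cases (e' q) with h1 | h1 <;> rcases zmod2_cases (e q) with h2 | h2
  · rw [h1, h2]
  · exact absurd ((h q).mpr h2) (by rw [h1]; decide)
  · exact absurd ((h q).mp h1) (by rw [h2]; decide)
  · rw [h1, h2]

lemma support_two (hd : 5 ≤ d) (e : (Toric d).edgeSet → ZMod 2) (hw : wt e = 2) :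
    ∃ Q1 Q2 : (Toric d).edgeSet, Q1 ≠ Q2 ∧ ∀ q, (e q = 1 ↔ q = Q1 ∨ q = Q2) := by
  unfold wt at hw
  rw [Nat.card_eq_two_iff] at hw
  obtain ⟨x, y, hxy, hxyuniv⟩ := hw
  refine ⟨x.1, y.1, fun h => hxy (Subtype.ext h), fun q => ⟨fun hq => ?_, ?_⟩⟩
  · have hmem : (⟨q, hq⟩ : {q : (Toric d).edgeSet // e q = 1}) ∈
        ({x, y} : Set {q : (Toric d).edgeSet // e q = 1}) := by
      rw [hxyuniv]; trivial
    rcases hmem with h | h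
    · exact Or.inl (congrArg Subtype.val h)
    · exact Or.inr (congrArg Subtype.val h)
  · rintro (rfl | rfl)
    · exact x.2
    · exact y.2

lemma support_cases (hd : 5 ≤ d) (e' : (Toric d).edgeSet → ZMod 2)
    (h : wt e' ≤ 2) :
    (∀ q, e' q ≠ 1) ∨ (∃ R, ∀ q, (e' q = 1 ↔ q = R)) ∨
      (∃ R1 R2, R1 ≠ R2 ∧ ∀ q, (e' q = 1 ↔ q = R1 ∨ q = R2)) := by
  haveI : NeZero d := ⟨by omega⟩
  unfold wt at h
  interval_cases hcard : (Nat.card {q : (Toric d).edgeSet // e' q = 1})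
  · left
    rw [Nat.card_eq_zero] at hcard
    rcases hcard with hcard | hcard
    · intro q hq
      exact hcard.elim' ⟨q, hq⟩
    · exact absurd hcard (by
        have : Finite {q : (Toric d).edgeSet // e' q = 1} := by infer_instance
        exact not_infinite_iff_finite.mpr this)
  · right; left
    rw [Nat.card_eq_one_iff_exists] at hcard
    obtain ⟨x, hx⟩ := hcard
    refine ⟨x.1, fun q => ⟨fun hq => congrArg Subtype.val (hx ⟨q, hq⟩), ?_⟩⟩
    rintro rfl
    exact x.2
  · right; right
    rw [Nat.card_eq_two_iff] at hcard
    obtain ⟨x, y, hxy, hxyuniv⟩ := hcard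
    refine ⟨x.1, y.1, fun h => hxy (Subtype.ext h), fun q => ⟨fun hq => ?_, ?_⟩⟩
    · have hmem : (⟨q, hq⟩ : {q : (Toric d).edgeSet // e' q = 1}) ∈
          ({x, y} : Set {q : (Toric d).edgeSet // e' q = 1}) := by
        rw [hxyuniv]; trivial
      rcases hmem with h' | h'
      · exact Or.inl (congrArg Subtype.val h')
      · exact Or.inr (congrArg Subtype.val h')
    · rintro (rfl | rfl)
      · exact x.2
      · exact y.2

lemma card_zero_of_empty {α : Type} (P : α → Prop) (h : ∀ x, ¬ P x) :
    Nat.card {x : α // P x} = 0 := by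
  rw [Nat.card_eq_zero]
  exact Or.inl ⟨fun x => h x.1 x.2⟩

lemma card_one_of_unique {α : Type} (P : α → Prop) (x : α) (hx : P x)
    (h : ∀ y, P y → y = x) : Nat.card {y : α // P y} = 1 := by
  rw [Nat.card_eq_one_iff_exists]
  exact ⟨⟨x, hx⟩, fun y => Subtype.ext (h y.1 y.2)⟩

lemma card_two_of_pair {α : Type} (P : α → Prop) (x y : α) (hxy : x ≠ y)
    (hx : P x) (hy : P y) (h : ∀ z, P z → z = x ∨ z = y) :
    Nat.card {z : α // P z} = 2 := by
  rw [Nat.card_eq_two_iff]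
  refine ⟨⟨x, hx⟩, ⟨y, hy⟩, fun hc => hxy (congrArg Subtype.val hc), ?_⟩
  ext z
  simp only [Set.mem_insert_iff, Set.mem_singleton_iff, Set.mem_univ, iff_true]
  rcases h z.1 z.2 with h' | h'
  · exact Or.inl (Subtype.ext h')
  · exact Or.inr (Subtype.ext h')

/-- Syndrome of an error supported on two distinct edges. -/
lemma synd_eq_two (e : (Toric d).edgeSet → ZMod 2) (Q1 Q2 : (Toric d).edgeSet)
    (hne : Q1 ≠ Q2) (hsupp : ∀ q, (e q = 1 ↔ q = Q1 ∨ q = Q2)) (c : V d) :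
    synd e c = chi (c ∈ (Q1 : Sym2 (V d))) + chi (c ∈ (Q2 : Sym2 (V d))) := by
  unfold synd
  have hcongr : Nat.card {q : (Toric d).edgeSet // e q = 1 ∧ c ∈ (q : Sym2 (V d))} =
      Nat.card {q : (Toric d).edgeSet // (q = Q1 ∨ q = Q2) ∧ c ∈ (q : Sym2 (V d))} :=
    Nat.card_congr (Equiv.subtypeEquivRight (fun q => by rw [hsupp q]))
  rw [hcongr]
  by_cases h1 : c ∈ (Q1 : Sym2 (V d)) <;> by_cases h2 : c ∈ (Q2 : Sym2 (V d))
  · rw [card_two_of_pair _ Q1 Q2 hne ⟨Or.inl rfl, h1⟩ ⟨Or.inr rfl, h2⟩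
      (fun z hz => hz.1), chi_pos h1, chi_pos h2]
    decide
  · rw [card_one_of_unique (fun q => (q = Q1 ∨ q = Q2) ∧ c ∈ (q : Sym2 (V d))) Q1 ⟨Or.inl rfl, h1⟩ (fun y hy => by
      rcases hy.1 with h' | h'
      · exact h'
      · exact absurd (h' ▸ hy.2) h2), chi_pos h1, chi_neg h2]
    decide
  · rw [card_one_of_unique (fun q => (q = Q1 ∨ q = Q2) ∧ c ∈ (q : Sym2 (V d))) Q2 ⟨Or.inr rfl, h2⟩ (fun y hy => by
      rcases hy.1 with h' | h'
      · exact absurd (h' ▸ hy.2) h1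
      · exact h'), chi_neg h1, chi_pos h2]
    decide
  · rw [card_zero_of_empty (fun q => (q = Q1 ∨ q = Q2) ∧ c ∈ (q : Sym2 (V d))) (fun y hy => by
      rcases hy.1 with h' | h'
      · exact absurd (h' ▸ hy.2) h1
      · exact absurd (h' ▸ hy.2) h2), chi_neg h1, chi_neg h2]
    decide

lemma synd_eq_one (e : (Toric d).edgeSet → ZMod 2) (R : (Toric d).edgeSet)
    (hsupp : ∀ q, (e q = 1 ↔ q = R)) (c : V d) :
    synd e c = chi (c ∈ (R : Sym2 (V d))) := by
  unfold synd
  have hcongr : Nat.card {q : (Toric d).edgeSet // e q = 1 ∧ c ∈ (q : Sym2 (V d))} =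
      Nat.card {q : (Toric d).edgeSet // q = R ∧ c ∈ (q : Sym2 (V d))} :=
    Nat.card_congr (Equiv.subtypeEquivRight (fun q => by rw [hsupp q]))
  rw [hcongr]
  by_cases h1 : c ∈ (R : Sym2 (V d))
  · rw [card_one_of_unique (fun q => q = R ∧ c ∈ (q : Sym2 (V d))) R ⟨rfl, h1⟩ (fun y hy => hy.1), chi_pos h1]
    decide
  · rw [card_zero_of_empty (fun q => q = R ∧ c ∈ (q : Sym2 (V d))) (fun y hy => h1 (hy.1 ▸ hy.2)), chi_neg h1]
    decide

lemma synd_eq_zero (e : (Toric d).edgeSet → ZMod 2)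
    (hsupp : ∀ q, e q ≠ 1) (c : V d) : synd e c = 0 := by
  unfold synd
  rw [card_zero_of_empty (fun q => e q = 1 ∧ c ∈ (q : Sym2 (V d))) (fun y hy => hsupp y hy.1)]
  decide

end Syndrome

section IntTransfer

variable {d : ℕ}

/-- The four unit directions as integer vectors. -/
def dirZ (j : Fin 4) : ℤ × ℤ :=
  if j = 0 then (1, 0) else if j = 1 then (0, 1) else if j = 2 then (-1, 0) else (0, -1)

/-- Casting an integer vector into the torus. -/
def iota (d : ℕ) (p : ℤ × ℤ) : V d := ((p.1 : ZMod d), (p.2 : ZMod d))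

lemma iota_add (p q : ℤ × ℤ) : iota d (p + q) = iota d p + iota d q := by
  unfold iota
  simp [Prod.ext_iff]

lemma iota_sub (p q : ℤ × ℤ) : iota d (p - q) = iota d p - iota d q := by
  unfold iota
  simp [Prod.ext_iff]

lemma iota_neg (p : ℤ × ℤ) : iota d (-p) = - iota d p := by
  unfold iota
  simp [Prod.ext_iff]

lemma iota_zero : iota d 0 = 0 := by
  unfold iota
  simp [Prod.ext_iff]

lemma zmod_small_eq_zero (hd : 5 ≤ d) {a : ℤ} (ha : a.natAbs ≤ 4)
    (h : (a : ZMod d) = 0) : a = 0 := by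
  haveI : NeZero d := ⟨by omega⟩
  rw [ZMod.intCast_zmod_eq_zero_iff_dvd] at h
  by_contra hne
  have habs : 0 < |a| := abs_pos.mpr hne
  have hled : (d : ℤ) ≤ |a| := Int.le_of_dvd habs ((dvd_abs _ _).mpr h)
  have h4 : |a| ≤ 4 := by
    rw [Int.abs_eq_natAbs]
    exact_mod_cast ha
  have hd' : (5 : ℤ) ≤ (d : ℤ) := by exact_mod_cast hd
  linarith

lemma iota_small_inj (hd : 5 ≤ d) {p : ℤ × ℤ} (h1 : p.1.natAbs ≤ 4)
    (h2 : p.2.natAbs ≤ 4) (h : iota d p = 0) : p = 0 := by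
  unfold iota at h
  rw [Prod.ext_iff] at h ⊢
  exact ⟨zmod_small_eq_zero hd h1 h.1, zmod_small_eq_zero hd h2 h.2⟩

lemma dirZ_bound (j k : Fin 4) :
    (dirZ j - dirZ k).1.natAbs ≤ 4 ∧ (dirZ j - dirZ k).2.natAbs ≤ 4 := by
  revert j k; decide

lemma dirZ_bound4 (j k l m : Fin 4) :
    ((dirZ j + dirZ k) - (dirZ l + dirZ m)).1.natAbs ≤ 4 ∧
    ((dirZ j + dirZ k) - (dirZ l + dirZ m)).2.natAbs ≤ 4 := by
  revert j k l m; decide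

lemma dirZ_bound3 (j k l : Fin 4) :
    ((dirZ j - dirZ k) - (dirZ l + dirZ l)).1.natAbs ≤ 4 ∧
    ((dirZ j - dirZ k) - (dirZ l + dirZ l)).2.natAbs ≤ 4 := by
  revert j k l; decide

/-- Transfer an equation of unit-vector sums from `ZMod d` to `ℤ`. -/
lemma transfer_diff (hd : 5 ≤ d) {j k : Fin 4}
    (h : iota d (dirZ j) = iota d (dirZ k)) : dirZ j = dirZ k := by
  have h0 : iota d (dirZ j - dirZ k) = 0 := by
    rw [iota_sub, h, sub_self]
  have := iota_small_inj hd (dirZ_bound j k).1 (dirZ_bound j k).2 h0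
  exact sub_eq_zero.mp this

end IntTransfer
section Geometry

variable {d : ℕ}

lemma iota_dir0 : iota d (dirZ 0) = ((1 : ZMod d), (0 : ZMod d)) := by
  simp [iota, dirZ]

lemma iota_dir1 : iota d (dirZ 1) = ((0 : ZMod d), (1 : ZMod d)) := by
  simp [iota, dirZ]

lemma iota_dir2 : iota d (dirZ 2) = ((-1 : ZMod d), (0 : ZMod d)) := by
  simp [iota, dirZ, Prod.ext_iff]

lemma iota_dir3 : iota d (dirZ 3) = ((0 : ZMod d), (-1 : ZMod d)) := by
  simp [iota, dirZ, Prod.ext_iff]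

lemma adj_dir {u v : V d} (h : (Toric d).Adj u v) :
    ∃ j : Fin 4, v = u + iota d (dirZ j) := by
  rw [toric_adj] at h
  obtain ⟨-, h⟩ := h
  have hconv : ∀ w : V d, u - v = w → v = u + (-w) := by
    intro w hw
    rw [← hw]
    ring
  rcases h with h | h | h | h
  · exact ⟨2, by rw [hconv _ h, iota_dir2]; congr 1; exact Prod.ext (by simp) (by simp)⟩
  · exact ⟨0, by rw [hconv _ h, iota_dir0]; congr 1; exact Prod.ext (by simp) (by simp)⟩
  · exact ⟨3, by rw [hconv _ h, iota_dir3]; congr 1; exact Prod.ext (by simp) (by simp)⟩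
  · exact ⟨1, by rw [hconv _ h, iota_dir1]; congr 1; exact Prod.ext (by simp) (by simp)⟩

lemma dirZ_bound1 (j : Fin 4) :
    (dirZ j).1.natAbs ≤ 4 ∧ (dirZ j).2.natAbs ≤ 4 := by
  revert j; decide

/-- Transfer: equality of two unit-sums in the torus gives integer equality. -/
lemma transfer_eq4 (hd : 5 ≤ d) {j k l m : Fin 4}
    (h : iota d (dirZ j) + iota d (dirZ k) = iota d (dirZ l) + iota d (dirZ m)) :
    dirZ j + dirZ k = dirZ l + dirZ m := by
  have h0 : iota d ((dirZ j + dirZ k) - (dirZ l + dirZ m)) = 0 := by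
    rw [iota_sub, iota_add, iota_add, h, sub_self]
  have := iota_small_inj hd (dirZ_bound4 j k l m).1 (dirZ_bound4 j k l m).2 h0
  exact sub_eq_zero.mp this

lemma transfer_eq_sum2 (hd : 5 ≤ d) {j k l : Fin 4}
    (h : iota d (dirZ j) - iota d (dirZ k) = iota d (dirZ l) + iota d (dirZ l)) :
    dirZ j - dirZ k = dirZ l + dirZ l := by
  have h0 : iota d ((dirZ j - dirZ k) - (dirZ l + dirZ l)) = 0 := by
    rw [iota_sub, iota_sub, iota_add, h, sub_self]
  have := iota_small_inj hd (dirZ_bound3 j k l).1 (dirZ_bound3 j k l).2 h0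
  exact sub_eq_zero.mp this

lemma dir_ne_zero (hd : 5 ≤ d) (j : Fin 4) : iota d (dirZ j) ≠ 0 := by
  intro h
  have h0 : iota d (dirZ j - 0) = 0 := by rw [iota_sub, h, iota_zero, sub_self]
  have hb : (dirZ j - 0).1.natAbs ≤ 4 ∧ (dirZ j - 0).2.natAbs ≤ 4 := by
    have := dirZ_bound1 j
    simpa using this
  have := iota_small_inj hd hb.1 hb.2 h0
  have hz : dirZ j = 0 := by simpa using this
  have hall : ∀ jj : Fin 4, dirZ jj ≠ 0 := by decide
  exact hall j hz

lemma two_dir_ne_zero (hd : 5 ≤ d) (j : Fin 4) :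
    iota d (dirZ j) + iota d (dirZ j) ≠ 0 := by
  intro h
  have h0 : iota d ((dirZ j - dirZ j) - (dirZ j + dirZ j)) = 0 := by
    rw [iota_sub, iota_sub, iota_add, h, sub_self, zero_sub, neg_eq_zero]
  have := iota_small_inj hd (dirZ_bound3 j j j).1 (dirZ_bound3 j j j).2 h0
  have hz : dirZ j - dirZ j = dirZ j + dirZ j := sub_eq_zero.mp this
  have hall : ∀ jj : Fin 4, dirZ jj - dirZ jj ≠ dirZ jj + dirZ jj := by decide
  exact hall j hz

lemma edge_rep (Q : (Toric d).edgeSet) :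
    ∃ x y, (Q : Sym2 (V d)) = s(x, y) ∧ (Toric d).Adj x y := by
  obtain ⟨q, hq⟩ := Q
  revert hq
  induction q using Sym2.ind with
  | _ x y =>
    intro hq
    rw [SimpleGraph.mem_edgeSet] at hq
    exact ⟨x, y, rfl, hq⟩

lemma sym2_eq_of_mem {z : Sym2 (V d)} {x y : V d} (hxy : x ≠ y)
    (hx : x ∈ z) (hy : y ∈ z) : z = s(x, y) := by
  induction z using Sym2.ind with
  | _ p q =>
    rw [Sym2.mem_iff] at hx hy
    rcases hx with rfl | rfl <;> rcases hy with rfl | rfl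
    · exact absurd rfl hxy
    · rfl
    · exact Sym2.eq_swap
    · exact absurd rfl hxy

lemma pigeon3 {x y z a b : V d} (hxy : x ≠ y) (hxz : x ≠ z) (hyz : y ≠ z)
    (hx : x = a ∨ x = b) (hy : y = a ∨ y = b) (hz : z = a ∨ z = b) : False := by
  rcases hx with rfl | rfl <;> rcases hy with rfl | rfl <;> rcases hz with rfl | rfl <;>
    simp_all

lemma mem3_false {z : Sym2 (V d)} {x y w : V d} (hxy : x ≠ y) (hxw : x ≠ w)
    (hyw : y ≠ w) (hx : x ∈ z) (hy : y ∈ z) (hw : w ∈ z) : False := by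
  induction z using Sym2.ind with
  | _ p q =>
    rw [Sym2.mem_iff] at hx hy hw
    exact pigeon3 hxy hxw hyw hx hy hw

lemma chi_sigma (M : Mirror d) (p v : V d) :
    chi (M.σ v = p) = chi (v = M.σ p) :=
  chi_congr ⟨fun h => by rw [← h, M.invol], fun h => by rw [h, M.invol]⟩

lemma mirror_fix2 (hd : 5 ≤ d) (a b : V d)
    (h : a.1 + a.2 = b.1 + b.2 ∨ a.1 - a.2 = b.1 - b.2) :
    ∃ M : Mirror d, M.σ a = a ∧ M.σ b = b := by
  rcases h with h | h
  · refine ⟨antiM hd (a.1 + a.2), ?_, ?_⟩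
    · rw [antiM_σ]
      exact Prod.ext (by ring) (by ring)
    · rw [antiM_σ]
      exact Prod.ext (by linear_combination h) (by linear_combination h)
  · refine ⟨mainM hd (a.1 - a.2), ?_, ?_⟩
    · rw [mainM_σ]
      exact Prod.ext (by ring) (by ring)
    · rw [mainM_σ]
      exact Prod.ext (by linear_combination h) (by linear_combination -h)

lemma decPerpDiag : ∀ ju jv : Fin 4, jv ≠ ju → dirZ jv ≠ - dirZ ju →
    ((dirZ ju).1 + (dirZ ju).2 = (dirZ jv).1 + (dirZ jv).2 ∨
     (dirZ ju).1 - (dirZ ju).2 = (dirZ jv).1 - (dirZ jv).2) := by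
  decide

lemma mirror_plaq (hd : 5 ≤ d) (P : V d) (jα jβ : Fin 4)
    (hperp : jβ = jα + 1 ∨ jβ = jα + 3) :
    ∃ M : Mirror d, M.σ (P + iota d (dirZ jα)) = P + iota d (dirZ jα) ∧
      M.σ (P + iota d (dirZ jβ)) = P + iota d (dirZ jβ) ∧
      M.σ P = P + iota d (dirZ jα) + iota d (dirZ jβ) := by
  have h4 : ∀ j : Fin 4, j = 0 ∨ j = 1 ∨ j = 2 ∨ j = 3 := by decide
  rcases hperp with rfl | rfl <;> rcases h4 jα with rfl | rfl | rfl | rfl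
  · -- jα = 0, jβ = 1 : anti, k = P.1 + P.2 + 1
    refine ⟨antiM hd (P.1 + P.2 + 1), ?_, ?_, ?_⟩ <;>
      simp only [show ((0 : Fin 4) + 1) = 1 from rfl, iota_dir0, iota_dir1, antiM_σ] <;>
      exact Prod.ext (by simp [Prod.fst_add, Prod.snd_add]; try ring)
        (by simp [Prod.fst_add, Prod.snd_add]; try ring)
  · -- jα = 1, jβ = 2 : main, m = P.1 - P.2 - 1
    refine ⟨mainM hd (P.1 - P.2 - 1), ?_, ?_, ?_⟩ <;>
      simp only [show ((1 : Fin 4) + 1) = 2 from rfl, iota_dir1, iota_dir2, mainM_σ] <;>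
      exact Prod.ext (by simp [Prod.fst_add, Prod.snd_add]; try ring)
        (by simp [Prod.fst_add, Prod.snd_add]; try ring)
  · -- jα = 2, jβ = 3 : anti, k = P.1 + P.2 - 1
    refine ⟨antiM hd (P.1 + P.2 - 1), ?_, ?_, ?_⟩ <;>
      simp only [show ((2 : Fin 4) + 1) = 3 from rfl, iota_dir2, iota_dir3, antiM_σ] <;>
      exact Prod.ext (by simp [Prod.fst_add, Prod.snd_add]; try ring)
        (by simp [Prod.fst_add, Prod.snd_add]; try ring)
  · -- jα = 3, jβ = 0 : main, m = P.1 - P.2 + 1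
    refine ⟨mainM hd (P.1 - P.2 + 1), ?_, ?_, ?_⟩ <;>
      simp only [show ((3 : Fin 4) + 1) = 0 from rfl, iota_dir3, iota_dir0, mainM_σ] <;>
      exact Prod.ext (by simp [Prod.fst_add, Prod.snd_add]; try ring)
        (by simp [Prod.fst_add, Prod.snd_add]; try ring)
  · -- jα = 0, jβ = 3 : main, m = P.1 - P.2 + 1
    refine ⟨mainM hd (P.1 - P.2 + 1), ?_, ?_, ?_⟩ <;>
      simp only [show ((0 : Fin 4) + 3) = 3 from rfl, iota_dir0, iota_dir3, mainM_σ] <;>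
      exact Prod.ext (by simp [Prod.fst_add, Prod.snd_add]; try ring)
        (by simp [Prod.fst_add, Prod.snd_add]; try ring)
  · -- jα = 1, jβ = 0 : anti, k = P.1 + P.2 + 1
    refine ⟨antiM hd (P.1 + P.2 + 1), ?_, ?_, ?_⟩ <;>
      simp only [show ((1 : Fin 4) + 3) = 0 from rfl, iota_dir1, iota_dir0, antiM_σ] <;>
      exact Prod.ext (by simp [Prod.fst_add, Prod.snd_add]; try ring)
        (by simp [Prod.fst_add, Prod.snd_add]; try ring)
  · -- jα = 2, jβ = 1 : main, m = P.1 - P.2 - 1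
    refine ⟨mainM hd (P.1 - P.2 - 1), ?_, ?_, ?_⟩ <;>
      simp only [show ((2 : Fin 4) + 3) = 1 from rfl, iota_dir2, iota_dir1, mainM_σ] <;>
      exact Prod.ext (by simp [Prod.fst_add, Prod.snd_add]; try ring)
        (by simp [Prod.fst_add, Prod.snd_add]; try ring)
  · -- jα = 3, jβ = 2 : anti, k = P.1 + P.2 - 1
    refine ⟨antiM hd (P.1 + P.2 - 1), ?_, ?_, ?_⟩ <;>
      simp only [show ((3 : Fin 4) + 3) = 2 from rfl, iota_dir3, iota_dir2, antiM_σ] <;>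
      exact Prod.ext (by simp [Prod.fst_add, Prod.snd_add]; try ring)
        (by simp [Prod.fst_add, Prod.snd_add]; try ring)

end Geometry
section Classification

variable {d : ℕ}

lemma or4_of_chi {p q r t : Prop} (h : (chi p + chi q) + (chi r + chi t) = 1) :
    p ∨ q ∨ r ∨ t := by
  by_cases hp : p
  · exact Or.inl hp
  by_cases hq : q
  · exact Or.inr (Or.inl hq)
  by_cases hr : r
  · exact Or.inr (Or.inr (Or.inl hr))
  by_cases ht : t
  · exact Or.inr (Or.inr (Or.inr ht))
  rw [chi_neg hp, chi_neg hq, chi_neg hr, chi_neg ht] at h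
  exact absurd h (by decide)

lemma inv_two (M : Mirror d) {s : V d → ZMod 2} {aa bb : V d}
    (hf : ∀ v, s v = chi (v = aa) + chi (v = bb))
    (ha : M.σ aa = aa) (hb : M.σ bb = bb) : ∀ v, s (M.σ v) = s v := by
  intro v
  rw [hf (M.σ v), hf v, chi_sigma, chi_sigma, ha, hb]

lemma inv_four (M : Mirror d) {s : V d → ZMod 2} {x1 y1 x2 y2 : V d}
    (hf : ∀ v, s v = (chi (v = x1) + chi (v = y1)) + (chi (v = x2) + chi (v = y2)))
    (h1 : M.σ x1 = y2) (h2 : M.σ y1 = y1) (h3 : M.σ x2 = x2) (h4 : M.σ y2 = x1) :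
    ∀ v, s (M.σ v) = s v := by
  intro v
  rw [hf (M.σ v), hf v, chi_sigma, chi_sigma, chi_sigma, chi_sigma, h1, h2, h3, h4]
  ring

lemma synd_formula_shared (e : (Toric d).edgeSet → ZMod 2)
    (Q1 Q2 : (Toric d).edgeSet) (hne : Q1 ≠ Q2)
    (hsupp : ∀ q, (e q = 1 ↔ q = Q1 ∨ q = Q2)) {c aa bb : V d}
    (h1 : (Q1 : Sym2 (V d)) = s(c, aa)) (h2 : (Q2 : Sym2 (V d)) = s(c, bb))
    (hab : aa ≠ bb) (hca : c ≠ aa) (hcb : c ≠ bb) (v : V d) :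
    synd e v = chi (v = aa) + chi (v = bb) := by
  rw [synd_eq_two e Q1 Q2 hne hsupp v, h1, h2,
    chi_congr (Sym2.mem_iff), chi_congr (Sym2.mem_iff)]
  by_cases hvc : v = c
  · subst hvc
    rw [chi_pos (Or.inl rfl), chi_pos (Or.inl rfl), chi_neg hca, chi_neg hcb]
    decide
  · rw [chi_congr (or_iff_right hvc), chi_congr (or_iff_right hvc)]

lemma synd_formula_disj (e : (Toric d).edgeSet → ZMod 2)
    (Q1 Q2 : (Toric d).edgeSet) (hne : Q1 ≠ Q2)
    (hsupp : ∀ q, (e q = 1 ↔ q = Q1 ∨ q = Q2)) {x1 y1 x2 y2 : V d}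
    (h1 : (Q1 : Sym2 (V d)) = s(x1, y1))
    (h2 : (Q2 : Sym2 (V d)) = s(x2, y2))
    (h11 : x1 ≠ y1) (h22 : x2 ≠ y2) (v : V d) :
    synd e v = (chi (v = x1) + chi (v = y1)) + (chi (v = x2) + chi (v = y2)) := by
  rw [synd_eq_two e Q1 Q2 hne hsupp v, h1, h2,
    chi_congr (Sym2.mem_iff), chi_congr (Sym2.mem_iff), chi_or h11, chi_or h22]

lemma decNeg : ∀ j : Fin 4, dirZ (j + 2) = - dirZ j := by decide

lemma iota_dir_neg (j : Fin 4) : iota d (dirZ (j + 2)) = - iota d (dirZ j) := by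
  rw [decNeg j, iota_neg]

lemma decA2 : ∀ ju jx jy : Fin 4, dirZ jx - dirZ jy = dirZ ju + dirZ ju →
    jx = ju ∧ jy = ju + 2 := by decide

lemma dec_unit_ne_2u : ∀ jk ju : Fin 4, dirZ jk + dirZ jk ≠ dirZ ju := by decide

lemma dirZ_bound2e (j k l : Fin 4) :
    ((dirZ j + dirZ k) - dirZ l).1.natAbs ≤ 4 ∧
    ((dirZ j + dirZ k) - dirZ l).2.natAbs ≤ 4 := by
  revert j k l; decide

lemma transfer_eq3 (hd : 5 ≤ d) {j k l : Fin 4}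
    (h : iota d (dirZ j) + iota d (dirZ k) = iota d (dirZ l)) :
    dirZ j + dirZ k = dirZ l := by
  have h0 : iota d ((dirZ j + dirZ k) - dirZ l) = 0 := by
    rw [iota_sub, iota_add, h, sub_self]
  have := iota_small_inj hd (dirZ_bound2e j k l).1 (dirZ_bound2e j k l).2 h0
  exact sub_eq_zero.mp this

lemma decB : ∀ jα jβ jγ jδ : Fin 4,
    dirZ jβ + dirZ jγ = dirZ jα + dirZ jδ → dirZ jβ ≠ dirZ jα →
    dirZ jβ + dirZ jγ ≠ 0 → dirZ jβ + dirZ jγ ≠ dirZ jα →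
    (jγ = jα ∧ jδ = jβ ∧ (jβ = jα + 1 ∨ jβ = jα + 3)) := by decide

/-- In the collinear (straight) case, any weight-two alternative error sharing the
syndrome must equal `e`. -/
lemma shared_case (hd : 5 ≤ d) {e e' : (Toric d).edgeSet → ZMod 2}
    {Q1 Q2 R1 R2 : (Toric d).edgeSet} (hne : Q1 ≠ Q2) (hRne : R1 ≠ R2)
    (hsupp : ∀ q, (e q = 1 ↔ q = Q1 ∨ q = Q2))
    (hsR : ∀ q, (e' q = 1 ↔ q = R1 ∨ q = R2))
    (hsynd : synd e' = synd e) (c : V d) (ju : Fin 4)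
    (h1 : (Q1 : Sym2 (V d)) = s(c, c + iota d (dirZ ju)))
    (h2 : (Q2 : Sym2 (V d)) = s(c, c - iota d (dirZ ju)))
    {c' a' b' : V d} (hR1 : (R1 : Sym2 (V d)) = s(c', a'))
    (hR2 : (R2 : Sym2 (V d)) = s(c', b')) : e' = e := by
  set u := iota d (dirZ ju) with hu
  have hu0 : u ≠ 0 := dir_ne_zero hd ju
  have h2u : u + u ≠ 0 := two_dir_ne_zero hd ju
  have hab : c + u ≠ c - u := by
    intro h
    exact h2u (by linear_combination h)
  have hca : c ≠ c + u := by
    intro h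
    exact hu0 (by linear_combination -h)
  have hcb : c ≠ c - u := by
    intro h
    exact hu0 (by linear_combination h)
  have hAdjA : (Toric d).Adj c' a' := by
    have := R1.2
    rw [hR1, SimpleGraph.mem_edgeSet] at this
    exact this
  have hAdjB : (Toric d).Adj c' b' := by
    have := R2.2
    rw [hR2, SimpleGraph.mem_edgeSet] at this
    exact this
  have ha'b' : a' ≠ b' := by
    intro h
    apply hRne
    apply Subtype.ext
    rw [hR1, hR2, h]
  have hform := synd_formula_shared e Q1 Q2 hne hsupp h1 h2 hab hca hcb
  have hform' := synd_formula_shared e' R1 R2 hRne hsR hR1 hR2 ha'b' hAdjA.ne hAdjB.ne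
  have heval : ∀ v, chi (v = a') + chi (v = b') = chi (v = c + u) + chi (v = c - u) := by
    intro v
    rw [← hform v, ← hform' v, hsynd]
  -- a' and b' are the two satisfied checks
  have haa : c + u = a' ∨ c + u = b' :=
    or_of_chi_add (by rw [heval (c + u), chi_pos rfl, chi_neg hab]; decide)
  have hbb : c - u = a' ∨ c - u = b' :=
    or_of_chi_add (by rw [heval (c - u), chi_pos rfl, chi_neg (fun h => hab h.symm)]
                      decide)
  obtain ⟨jx, hjx⟩ := adj_dir hAdjA
  obtain ⟨jy, hjy⟩ := adj_dir hAdjB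
  rcases haa with haa | haa
  · -- a' = c + u ; then b' = c - u
    have hbb' : c - u = b' := by
      rcases hbb with h | h
      · exact absurd (h ▸ haa) hab
      · exact h
    -- unit equation
    have hxy : iota d (dirZ jx) - iota d (dirZ jy) = iota d (dirZ ju) + iota d (dirZ ju) := by
      rw [← hu]
      linear_combination - hjx + hjy - haa + hbb'
    obtain ⟨hxu, hyu⟩ := decA2 ju jx jy (transfer_eq_sum2 hd hxy)
    subst hxu
    have hc' : c' = c := by
      have : a' = c' + u := hjx
      rw [← haa] at this
      linear_combination -this
    apply err_eq
    intro q
    rw [hsR q, hsupp q]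
    have hR1Q1 : R1 = Q1 := by
      apply Subtype.ext
      rw [hR1, h1, hc', ← haa]
    have hR2Q2 : R2 = Q2 := by
      apply Subtype.ext
      rw [hR2, h2, hc', ← hbb']
    rw [hR1Q1, hR2Q2]
  · -- a' = c - u ; then b' = c + u
    have hbb' : c - u = a' := by
      rcases hbb with h | h
      · exact h
      · exact absurd (h ▸ haa) hab
    have hxy : iota d (dirZ jy) - iota d (dirZ jx) = iota d (dirZ ju) + iota d (dirZ ju) := by
      rw [← hu]
      linear_combination - hjy + hjx - haa + hbb'
    obtain ⟨hxu, hyu⟩ := decA2 ju jy jx (transfer_eq_sum2 hd hxy)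
    subst hxu
    have hc' : c' = c := by
      have : b' = c' + u := hjy
      rw [← haa] at this
      linear_combination -this
    apply err_eq
    intro q
    rw [hsR q, hsupp q]
    have hR1Q2 : R1 = Q2 := by
      apply Subtype.ext
      rw [hR1, h2, hc', ← hbb']
    have hR2Q1 : R2 = Q1 := by
      apply Subtype.ext
      rw [hR2, h1, hc', ← haa]
    rw [hR1Q2, hR2Q1]
    tauto

end Classification
section CaseA

variable {d : ℕ}

lemma straight_contra (hd : 5 ≤ d) (e : (Toric d).edgeSet → ZMod 2)
    (hw : wt e = 2) (hdeg : Degenerate e) {Q1 Q2 : (Toric d).edgeSet}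
    (hne : Q1 ≠ Q2) (hsupp : ∀ q, (e q = 1 ↔ q = Q1 ∨ q = Q2)) (c : V d) (ju : Fin 4)
    (h1 : (Q1 : Sym2 (V d)) = s(c, c + iota d (dirZ ju)))
    (h2 : (Q2 : Sym2 (V d)) = s(c, c - iota d (dirZ ju))) : False := by
  set u := iota d (dirZ ju) with hu
  have hu0 : u ≠ 0 := dir_ne_zero hd ju
  have h2u : u + u ≠ 0 := two_dir_ne_zero hd ju
  have hab : c + u ≠ c - u := fun h => h2u (by linear_combination h)
  have hca : c ≠ c + u := fun h => hu0 (by linear_combination -h)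
  have hcb : c ≠ c - u := fun h => hu0 (by linear_combination h)
  have hform := synd_formula_shared e Q1 Q2 hne hsupp h1 h2 hab hca hcb
  obtain ⟨e', hne', hwle, hsynd⟩ := hdeg
  rcases support_cases hd e' (hw ▸ hwle) with hempty | ⟨R, hsR⟩ | ⟨R1, R2, hRne, hsR⟩
  · -- empty support
    have h0 := synd_eq_zero e' hempty (c + u)
    rw [congrFun hsynd (c + u), hform (c + u), chi_pos rfl, chi_neg hab] at h0
    exact absurd h0 (by decide)
  · -- single edge
    have hvalaa : synd e' (c + u) = 1 := by
      rw [congrFun hsynd (c + u), hform (c + u), chi_pos rfl, chi_neg hab]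
      decide
    have hvalbb : synd e' (c - u) = 1 := by
      rw [congrFun hsynd (c - u), hform (c - u), chi_pos rfl,
        chi_neg (fun h => hab h.symm)]
      decide
    rw [synd_eq_one e' R hsR] at hvalaa hvalbb
    have hmemaa := chi_eq_one_iff.mp hvalaa
    have hmembb := chi_eq_one_iff.mp hvalbb
    have hReq : (R : Sym2 (V d)) = s(c + u, c - u) :=
      sym2_eq_of_mem hab hmemaa hmembb
    have hAdj : (Toric d).Adj (c + u) (c - u) := by
      have := R.2
      rw [hReq, SimpleGraph.mem_edgeSet] at this
      exact this
    obtain ⟨jk, hjk⟩ := adj_dir hAdj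
    -- c - u = c + u + iota jk, so iota jk = -2u, i.e. iota (jk+2) = 2u
    have heq : iota d (dirZ ju) + iota d (dirZ ju) = iota d (dirZ (jk + 2)) := by
      rw [iota_dir_neg jk, ← hu]
      linear_combination - hjk
    exact dec_unit_ne_2u ju (jk + 2) (transfer_eq3 hd heq)
  · -- two edges
    obtain ⟨p1, q1v, hR1, hadjR1⟩ := edge_rep R1
    obtain ⟨p2, q2v, hR2, hadjR2⟩ := edge_rep R2
    by_cases hshare : p1 = p2 ∨ p1 = q2v ∨ q1v = p2 ∨ q1v = q2v
    · -- shared vertex: e' = e, contradiction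
      apply hne'
      rcases hshare with heq | heq | heq | heq
      · exact shared_case hd hne hRne hsupp hsR hsynd c ju h1 h2 hR1
          (show (R2 : Sym2 (V d)) = s(p1, q2v) by rw [hR2, ← heq])
      · exact shared_case hd hne hRne hsupp hsR hsynd c ju h1 h2 hR1
          (show (R2 : Sym2 (V d)) = s(p1, p2) by
            rw [hR2, ← heq]; exact Sym2.eq_swap)
      · exact shared_case hd hne hRne hsupp hsR hsynd c ju h1 h2
          (show (R1 : Sym2 (V d)) = s(q1v, p1) by rw [hR1]; exact Sym2.eq_swap)
          (show (R2 : Sym2 (V d)) = s(q1v, q2v) by rw [hR2, ← heq])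
      · exact shared_case hd hne hRne hsupp hsR hsynd c ju h1 h2
          (show (R1 : Sym2 (V d)) = s(q1v, p1) by rw [hR1]; exact Sym2.eq_swap)
          (show (R2 : Sym2 (V d)) = s(q1v, p2) by
            rw [hR2, ← heq]; exact Sym2.eq_swap)
    · -- disjoint pair of edges: three distinct unsatisfied checks, contradiction
      push_neg at hshare
      obtain ⟨hs1, hs2, hs3, hs4⟩ := hshare
      have hform' := synd_eq_two e' R1 R2 hRne hsR
      have hp1 : synd e' p1 = 1 := by
        rw [hform' p1, chi_pos (by rw [hR1]; exact Sym2.mem_iff.mpr (Or.inl rfl)),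
          chi_neg (by rw [hR2]; rw [Sym2.mem_iff]; tauto)]
        decide
      have hq1 : synd e' q1v = 1 := by
        rw [hform' q1v, chi_pos (by rw [hR1]; exact Sym2.mem_iff.mpr (Or.inr rfl)),
          chi_neg (by rw [hR2]; rw [Sym2.mem_iff]; tauto)]
        decide
      have hp2 : synd e' p2 = 1 := by
        rw [hform' p2,
          chi_neg (show ¬ p2 ∈ (R1 : Sym2 (V d)) by
            rw [hR1, Sym2.mem_iff]
            push_neg
            exact ⟨fun h => hs1 h.symm, fun h => hs3 h.symm⟩),
          chi_pos (show p2 ∈ (R2 : Sym2 (V d)) by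
            rw [hR2]
            exact Sym2.mem_iff.mpr (Or.inl rfl))]
        decide
      have hmem : ∀ w : V d, synd e' w = 1 → (w = c + u ∨ w = c - u) := by
        intro w hw
        rw [congrFun hsynd w, hform w] at hw
        exact or_of_chi_add hw
      exact pigeon3 hadjR1.ne hs1 hs3 (hmem p1 hp1) (hmem q1v hq1) (hmem p2 hp2)

lemma caseA_core (hd : 5 ≤ d) (e : (Toric d).edgeSet → ZMod 2)
    (hw : wt e = 2) (hdeg : Degenerate e) {Q1 Q2 : (Toric d).edgeSet}
    (hne : Q1 ≠ Q2) (hsupp : ∀ q, (e q = 1 ↔ q = Q1 ∨ q = Q2)) (c aa bb : V d)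
    (h1 : (Q1 : Sym2 (V d)) = s(c, aa)) (h2 : (Q2 : Sym2 (V d)) = s(c, bb)) :
    ∃ (M : Mirror d) (a : V d), M.σ a = a ∧ (∀ v, synd e (M.σ v) = synd e v) ∧
      synd e a = 1 := by
  have hAdjA : (Toric d).Adj c aa := by
    have := Q1.2
    rw [h1, SimpleGraph.mem_edgeSet] at this
    exact this
  have hAdjB : (Toric d).Adj c bb := by
    have := Q2.2
    rw [h2, SimpleGraph.mem_edgeSet] at this
    exact this
  have hab : aa ≠ bb := by
    intro h
    apply hne
    apply Subtype.ext
    rw [h1, h2, h]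
  obtain ⟨ju, hju⟩ := adj_dir hAdjA
  obtain ⟨jv, hjv⟩ := adj_dir hAdjB
  by_cases hcol : dirZ jv = - dirZ ju
  · -- collinear: contradiction with degeneracy
    exfalso
    have hbb' : bb = c - iota d (dirZ ju) := by
      rw [hjv, show iota d (dirZ jv) = - iota d (dirZ ju) by rw [hcol, iota_neg]]
      ring
    exact straight_contra hd e hw hdeg hne hsupp c ju (by rw [h1, hju])
      (by rw [h2, hbb'])
  · -- perpendicular: mirror through the diagonal {aa, bb}
    have hjune : jv ≠ ju := by
      intro h
      apply hab
      rw [hju, hjv, h]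
    rcases decPerpDiag ju jv hjune hcol with hsum | hdiff
    · have hdi : aa.1 + aa.2 = bb.1 + bb.2 ∨ aa.1 - aa.2 = bb.1 - bb.2 := by
        left
        rw [hju, hjv]
        have hc : (((dirZ ju).1 + (dirZ ju).2 : ℤ) : ZMod d) =
            (((dirZ jv).1 + (dirZ jv).2 : ℤ) : ZMod d) := by rw [hsum]
        push_cast at hc
        simp only [Prod.fst_add, Prod.snd_add, iota]
        linear_combination hc
      obtain ⟨M, hMa, hMb⟩ := mirror_fix2 hd aa bb hdi
      have hform := synd_formula_shared e Q1 Q2 hne hsupp h1 h2 hab hAdjA.ne hAdjB.ne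
      refine ⟨M, aa, hMa, inv_two M hform hMa hMb, ?_⟩
      rw [hform aa, chi_pos rfl, chi_neg hab]
      decide
    · have hdi : aa.1 + aa.2 = bb.1 + bb.2 ∨ aa.1 - aa.2 = bb.1 - bb.2 := by
        right
        rw [hju, hjv]
        have hc : (((dirZ ju).1 - (dirZ ju).2 : ℤ) : ZMod d) =
            (((dirZ jv).1 - (dirZ jv).2 : ℤ) : ZMod d) := by rw [hdiff]
        push_cast at hc
        simp only [Prod.fst_add, Prod.snd_add, iota]
        linear_combination hc
      obtain ⟨M, hMa, hMb⟩ := mirror_fix2 hd aa bb hdi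
      have hform := synd_formula_shared e Q1 Q2 hne hsupp h1 h2 hab hAdjA.ne hAdjB.ne
      refine ⟨M, aa, hMa, inv_two M hform hMa hMb, ?_⟩
      rw [hform aa, chi_pos rfl, chi_neg hab]
      decide

end CaseA
section CaseB

variable {d : ℕ}

lemma caseB_final (hd : 5 ≤ d) (e : (Toric d).edgeSet → ZMod 2)
    {Q1 Q2 : (Toric d).edgeSet} (hne : Q1 ≠ Q2)
    (hsupp : ∀ q, (e q = 1 ↔ q = Q1 ∨ q = Q2)) (x1 y1 x2 y2 : V d)
    (h1 : (Q1 : Sym2 (V d)) = s(x1, y1))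
    (h2 : (Q2 : Sym2 (V d)) = s(x2, y2))
    (hadj1 : (Toric d).Adj x1 y1) (hadj2 : (Toric d).Adj x2 y2)
    (hadj12 : (Toric d).Adj x1 x2) (hadjyy : (Toric d).Adj y1 y2)
    (dx1x2 : x1 ≠ x2) (dx1y2 : x1 ≠ y2) (dy1x2 : y1 ≠ x2) (dy1y2 : y1 ≠ y2) :
    ∃ (M : Mirror d) (a : V d), M.σ a = a ∧ (∀ v, synd e (M.σ v) = synd e v) ∧
      synd e a = 1 := by
  obtain ⟨jα, hjα⟩ := adj_dir hadj1
  obtain ⟨jβ, hjβ⟩ := adj_dir hadj12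
  obtain ⟨jγ, hjγ⟩ := adj_dir hadj2
  obtain ⟨jδ, hjδ⟩ := adj_dir hadjyy
  have heq : iota d (dirZ jβ) + iota d (dirZ jγ) = iota d (dirZ jα) + iota d (dirZ jδ) := by
    linear_combination - hjγ - hjβ + hjδ + hjα
  have hne1 : dirZ jβ ≠ dirZ jα := by
    intro h
    apply dy1x2
    rw [hjα, hjβ, h]
  have hne2 : dirZ jβ + dirZ jγ ≠ 0 := by
    intro h
    apply dx1y2
    have h0 : iota d (dirZ jβ) + iota d (dirZ jγ) = 0 := by
      rw [← iota_add, h, iota_zero]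
    linear_combination - hjγ - hjβ - h0
  have hne3 : dirZ jβ + dirZ jγ ≠ dirZ jα := by
    intro h
    apply dy1y2
    have h0 : iota d (dirZ jβ) + iota d (dirZ jγ) = iota d (dirZ jα) := by
      rw [← iota_add, h]
    linear_combination - hjγ - hjβ - h0 + hjα
  obtain ⟨hγα, hδβ, hperp⟩ := decB jα jβ jγ jδ (transfer_eq4 hd heq) hne1 hne2 hne3
  rw [hγα] at hjγ
  obtain ⟨M, hM1, hM2, hM3⟩ := mirror_plaq hd x1 jα jβ hperp
  have hMy1 : M.σ y1 = y1 := by rw [hjα]; exact hM1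
  have hMx2 : M.σ x2 = x2 := by rw [hjβ]; exact hM2
  have hMx1 : M.σ x1 = y2 := by
    rw [hM3]
    linear_combination - hjγ - hjβ
  have hMy2 : M.σ y2 = x1 := by
    rw [← hMx1]
    exact M.invol x1
  have hform := synd_formula_disj e Q1 Q2 hne hsupp h1 h2 hadj1.ne hadj2.ne
  refine ⟨M, y1, hMy1, inv_four M hform hMx1 hMy1 hMx2 hMy2, ?_⟩
  rw [hform y1, chi_neg hadj1.ne.symm, chi_pos rfl, chi_neg dy1x2, chi_neg dy1y2]
  decide

lemma caseB_shared_contra (hd : 5 ≤ d) {e e' : (Toric d).edgeSet → ZMod 2}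
    {Q1 Q2 R1 R2 : (Toric d).edgeSet} (hne : Q1 ≠ Q2) (hRne : R1 ≠ R2)
    (hsupp : ∀ q, (e q = 1 ↔ q = Q1 ∨ q = Q2))
    (hsR : ∀ q, (e' q = 1 ↔ q = R1 ∨ q = R2))
    (hsynd : synd e' = synd e) {x1 y1 x2 y2 : V d}
    (h1 : (Q1 : Sym2 (V d)) = s(x1, y1))
    (h2 : (Q2 : Sym2 (V d)) = s(x2, y2))
    (h11 : x1 ≠ y1) (h22 : x2 ≠ y2) (dx1x2 : x1 ≠ x2) (dy1x2 : y1 ≠ x2)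
    (dx1y2 : x1 ≠ y2) (dy1y2 : y1 ≠ y2)
    {c' a' b' : V d} (hR1 : (R1 : Sym2 (V d)) = s(c', a'))
    (hR2 : (R2 : Sym2 (V d)) = s(c', b')) : False := by
  have hAdjA : (Toric d).Adj c' a' := by
    have := R1.2
    rw [hR1, SimpleGraph.mem_edgeSet] at this
    exact this
  have hAdjB : (Toric d).Adj c' b' := by
    have := R2.2
    rw [hR2, SimpleGraph.mem_edgeSet] at this
    exact this
  have ha'b' : a' ≠ b' := by
    intro h
    apply hRne
    apply Subtype.ext
    rw [hR1, hR2, h]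
  have hform' := synd_formula_shared e' R1 R2 hRne hsR hR1 hR2 ha'b' hAdjA.ne hAdjB.ne
  have hform := synd_formula_disj e Q1 Q2 hne hsupp h1 h2 h11 h22
  have hmem : ∀ w, synd e w = 1 → (w = a' ∨ w = b') := by
    intro w hw
    apply or_of_chi_add
    rw [← hform' w, congrFun hsynd w]
    exact hw
  have sx1 : synd e x1 = 1 := by
    rw [hform x1, chi_pos rfl, chi_neg h11, chi_neg dx1x2, chi_neg dx1y2]
    decide
  have sy1 : synd e y1 = 1 := by
    rw [hform y1, chi_neg h11.symm, chi_pos rfl, chi_neg dy1x2, chi_neg dy1y2]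
    decide
  have sx2 : synd e x2 = 1 := by
    rw [hform x2, chi_neg dx1x2.symm, chi_neg dy1x2.symm, chi_pos rfl, chi_neg h22]
    decide
  exact pigeon3 h11 dx1x2 dy1x2 (hmem x1 sx1) (hmem y1 sy1) (hmem x2 sx2)

lemma caseB_x1R1 (hd : 5 ≤ d) {e e' : (Toric d).edgeSet → ZMod 2} (hne' : e' ≠ e)
    {Q1 Q2 R1 R2 : (Toric d).edgeSet} (hne : Q1 ≠ Q2) (hRne : R1 ≠ R2)
    (hsupp : ∀ q, (e q = 1 ↔ q = Q1 ∨ q = Q2))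
    (hsR : ∀ q, (e' q = 1 ↔ q = R1 ∨ q = R2))
    (hsynd : synd e' = synd e) {x1 y1 x2 y2 : V d}
    (h1 : (Q1 : Sym2 (V d)) = s(x1, y1))
    (h2 : (Q2 : Sym2 (V d)) = s(x2, y2))
    (hadj1 : (Toric d).Adj x1 y1) (hadj2 : (Toric d).Adj x2 y2)
    (dx1x2 : x1 ≠ x2) (dx1y2 : x1 ≠ y2) (dy1x2 : y1 ≠ x2) (dy1y2 : y1 ≠ y2)
    (hdisj : ∀ w : V d, w ∈ (R1 : Sym2 (V d)) → ¬ w ∈ (R2 : Sym2 (V d)))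
    (hx1R1 : x1 ∈ (R1 : Sym2 (V d))) :
    ∃ (M : Mirror d) (a : V d), M.σ a = a ∧ (∀ v, synd e (M.σ v) = synd e v) ∧
      synd e a = 1 := by
  have hform := synd_formula_disj e Q1 Q2 hne hsupp h1 h2 hadj1.ne hadj2.ne
  have hform' := synd_eq_two e' R1 R2 hRne hsR
  have hmem4 : ∀ w, synd e w = 1 → (w = x1 ∨ w = y1 ∨ w = x2 ∨ w = y2) := by
    intro w hw
    have h := hform w
    rw [hw] at h
    exact or4_of_chi h.symm
  obtain ⟨t, hR1t⟩ := Sym2.mem_iff_exists.mp hx1R1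
  have hadjt : (Toric d).Adj x1 t := by
    have := R1.2
    rw [hR1t, SimpleGraph.mem_edgeSet] at this
    exact this
  have htR1 : t ∈ (R1 : Sym2 (V d)) := by
    rw [hR1t]
    exact Sym2.mem_iff.mpr (Or.inr rfl)
  have hts : synd e t = 1 := by
    rw [← congrFun hsynd t, hform' t, chi_pos htR1, chi_neg (hdisj t htR1)]
    decide
  have sy1 : synd e y1 = 1 := by
    rw [hform y1, chi_neg hadj1.ne.symm, chi_pos rfl, chi_neg dy1x2, chi_neg dy1y2]
    decide
  rcases hmem4 t hts with ht | ht | ht | ht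
  · exact absurd ht.symm hadjt.ne
  · -- t = y1 : R1 = Q1, hence R2 = Q2 and e' = e, contradiction
    exfalso
    apply hne'
    have hR1Q1 : R1 = Q1 := by
      apply Subtype.ext
      rw [hR1t, ht, h1]
    have hchi : ∀ v : V d, chi (v ∈ (R2 : Sym2 (V d))) = chi (v ∈ (Q2 : Sym2 (V d))) := by
      intro v
      have hv := congrFun hsynd v
      rw [hform' v, synd_eq_two e Q1 Q2 hne hsupp v, hR1Q1] at hv
      exact add_left_cancel hv
    obtain ⟨p2, q2v, hR2rep, hadjR2⟩ := edge_rep R2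
    have hp2 : p2 ∈ (Q2 : Sym2 (V d)) := by
      apply chi_eq_one_iff.mp
      rw [← hchi p2]
      exact chi_pos (by rw [hR2rep]; exact Sym2.mem_iff.mpr (Or.inl rfl))
    have hq2 : q2v ∈ (Q2 : Sym2 (V d)) := by
      apply chi_eq_one_iff.mp
      rw [← hchi q2v]
      exact chi_pos (by rw [hR2rep]; exact Sym2.mem_iff.mpr (Or.inr rfl))
    have hR2Q2 : R2 = Q2 := by
      apply Subtype.ext
      rw [hR2rep, sym2_eq_of_mem hadjR2.ne hp2 hq2]
    apply err_eq
    intro q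
    rw [hsR q, hsupp q, hR1Q1, hR2Q2]
  · -- t = x2 : R1 = {x1, x2}, R2 = {y1, y2}
    rw [ht] at hR1t hadjt htR1
    have hy1R2 : y1 ∈ (R2 : Sym2 (V d)) := by
      apply chi_eq_one_iff.mp
      have hv := congrFun hsynd y1
      rw [hform' y1, sy1, chi_neg (show ¬ y1 ∈ (R1 : Sym2 (V d)) by
        rw [hR1t, Sym2.mem_iff]
        push_neg
        exact ⟨hadj1.ne.symm, dy1x2⟩)] at hv
      rw [← hv]
      ring
    obtain ⟨t', hR2t'⟩ := Sym2.mem_iff_exists.mp hy1R2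
    have hadjt' : (Toric d).Adj y1 t' := by
      have := R2.2
      rw [hR2t', SimpleGraph.mem_edgeSet] at this
      exact this
    have ht'R2 : t' ∈ (R2 : Sym2 (V d)) := by
      rw [hR2t']
      exact Sym2.mem_iff.mpr (Or.inr rfl)
    have ht'nR1 : ¬ t' ∈ (R1 : Sym2 (V d)) := fun h => hdisj t' h ht'R2
    have ht's : synd e t' = 1 := by
      rw [← congrFun hsynd t', hform' t', chi_neg ht'nR1, chi_pos ht'R2]
      decide
    rcases hmem4 t' ht's with ht' | ht' | ht' | ht'
    · rw [ht'] at ht'nR1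
      exact absurd hx1R1 ht'nR1
    · exact absurd ht'.symm hadjt'.ne
    · rw [ht'] at ht'nR1
      exact absurd htR1 ht'nR1
    · rw [ht'] at hadjt'
      exact caseB_final hd e hne hsupp x1 y1 x2 y2 h1 h2 hadj1 hadj2 hadjt hadjt'
        dx1x2 dx1y2 dy1x2 dy1y2
  · -- t = y2 : R1 = {x1, y2}, R2 = {y1, x2}
    rw [ht] at hR1t hadjt htR1
    have hy1R2 : y1 ∈ (R2 : Sym2 (V d)) := by
      apply chi_eq_one_iff.mp
      have hv := congrFun hsynd y1
      rw [hform' y1, sy1, chi_neg (show ¬ y1 ∈ (R1 : Sym2 (V d)) by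
        rw [hR1t, Sym2.mem_iff]
        push_neg
        exact ⟨hadj1.ne.symm, dy1y2⟩)] at hv
      rw [← hv]
      ring
    obtain ⟨t', hR2t'⟩ := Sym2.mem_iff_exists.mp hy1R2
    have hadjt' : (Toric d).Adj y1 t' := by
      have := R2.2
      rw [hR2t', SimpleGraph.mem_edgeSet] at this
      exact this
    have ht'R2 : t' ∈ (R2 : Sym2 (V d)) := by
      rw [hR2t']
      exact Sym2.mem_iff.mpr (Or.inr rfl)
    have ht'nR1 : ¬ t' ∈ (R1 : Sym2 (V d)) := fun h => hdisj t' h ht'R2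
    have ht's : synd e t' = 1 := by
      rw [← congrFun hsynd t', hform' t', chi_neg ht'nR1, chi_pos ht'R2]
      decide
    rcases hmem4 t' ht's with ht' | ht' | ht' | ht'
    · rw [ht'] at ht'nR1
      exact absurd hx1R1 ht'nR1
    · exact absurd ht'.symm hadjt'.ne
    · -- t' = x2 : apply caseB_final with x2 and y2 swapped
      rw [ht'] at hadjt'
      exact caseB_final hd e hne hsupp x1 y1 y2 x2 h1
        (by rw [h2]; exact Sym2.eq_swap) hadj1 hadj2.symm hadjt hadjt'
        dx1y2 dx1x2 dy1y2 dy1x2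
    · rw [ht'] at ht'nR1
      exact absurd htR1 ht'nR1

lemma caseB (hd : 5 ≤ d) (e : (Toric d).edgeSet → ZMod 2)
    (hw : wt e = 2) (hdeg : Degenerate e) {Q1 Q2 : (Toric d).edgeSet}
    (hne : Q1 ≠ Q2) (hsupp : ∀ q, (e q = 1 ↔ q = Q1 ∨ q = Q2)) (x1 y1 x2 y2 : V d)
    (h1 : (Q1 : Sym2 (V d)) = s(x1, y1))
    (h2 : (Q2 : Sym2 (V d)) = s(x2, y2))
    (hadj1 : (Toric d).Adj x1 y1) (hadj2 : (Toric d).Adj x2 y2)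
    (dx1x2 : x1 ≠ x2) (dx1y2 : x1 ≠ y2) (dy1x2 : y1 ≠ x2) (dy1y2 : y1 ≠ y2) :
    ∃ (M : Mirror d) (a : V d), M.σ a = a ∧ (∀ v, synd e (M.σ v) = synd e v) ∧
      synd e a = 1 := by
  have hform := synd_formula_disj e Q1 Q2 hne hsupp h1 h2 hadj1.ne hadj2.ne
  have sx1 : synd e x1 = 1 := by
    rw [hform x1, chi_pos rfl, chi_neg hadj1.ne, chi_neg dx1x2, chi_neg dx1y2]
    decide
  have sy1 : synd e y1 = 1 := by
    rw [hform y1, chi_neg hadj1.ne.symm, chi_pos rfl, chi_neg dy1x2, chi_neg dy1y2]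
    decide
  have sx2 : synd e x2 = 1 := by
    rw [hform x2, chi_neg dx1x2.symm, chi_neg dy1x2.symm, chi_pos rfl, chi_neg hadj2.ne]
    decide
  obtain ⟨e', hne', hwle, hsynd⟩ := hdeg
  rcases support_cases hd e' (hw ▸ hwle) with hempty | ⟨R, hsR⟩ | ⟨R1, R2, hRne, hsR⟩
  · exfalso
    have h0 := synd_eq_zero e' hempty x1
    rw [congrFun hsynd x1, sx1] at h0
    exact absurd h0 (by decide)
  · exfalso
    have hvx1 : x1 ∈ (R : Sym2 (V d)) := by
      apply chi_eq_one_iff.mp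
      rw [← synd_eq_one e' R hsR x1, congrFun hsynd x1]
      exact sx1
    have hvy1 : y1 ∈ (R : Sym2 (V d)) := by
      apply chi_eq_one_iff.mp
      rw [← synd_eq_one e' R hsR y1, congrFun hsynd y1]
      exact sy1
    have hvx2 : x2 ∈ (R : Sym2 (V d)) := by
      apply chi_eq_one_iff.mp
      rw [← synd_eq_one e' R hsR x2, congrFun hsynd x2]
      exact sx2
    exact mem3_false hadj1.ne dx1x2 dy1x2 hvx1 hvy1 hvx2
  · obtain ⟨p1, q1v, hR1rep, hadjR1⟩ := edge_rep R1
    obtain ⟨p2, q2v, hR2rep, hadjR2⟩ := edge_rep R2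
    by_cases hshare : p1 = p2 ∨ p1 = q2v ∨ q1v = p2 ∨ q1v = q2v
    · exfalso
      rcases hshare with heq | heq | heq | heq
      · exact caseB_shared_contra hd hne hRne hsupp hsR hsynd h1 h2
          hadj1.ne hadj2.ne dx1x2 dy1x2 dx1y2 dy1y2 hR1rep
          (show (R2 : Sym2 (V d)) = s(p1, q2v) by rw [hR2rep, ← heq])
      · exact caseB_shared_contra hd hne hRne hsupp hsR hsynd h1 h2
          hadj1.ne hadj2.ne dx1x2 dy1x2 dx1y2 dy1y2 hR1rep
          (show (R2 : Sym2 (V d)) = s(p1, p2) by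
            rw [hR2rep, ← heq]; exact Sym2.eq_swap)
      · exact caseB_shared_contra hd hne hRne hsupp hsR hsynd h1 h2
          hadj1.ne hadj2.ne dx1x2 dy1x2 dx1y2 dy1y2
          (show (R1 : Sym2 (V d)) = s(q1v, p1) by
            rw [hR1rep]; exact Sym2.eq_swap)
          (show (R2 : Sym2 (V d)) = s(q1v, q2v) by rw [hR2rep, ← heq])
      · exact caseB_shared_contra hd hne hRne hsupp hsR hsynd h1 h2
          hadj1.ne hadj2.ne dx1x2 dy1x2 dx1y2 dy1y2
          (show (R1 : Sym2 (V d)) = s(q1v, p1) by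
            rw [hR1rep]; exact Sym2.eq_swap)
          (show (R2 : Sym2 (V d)) = s(q1v, p2) by
            rw [hR2rep, ← heq]; exact Sym2.eq_swap)
    · push_neg at hshare
      obtain ⟨hs1, hs2, hs3, hs4⟩ := hshare
      have hdisj : ∀ w : V d, w ∈ (R1 : Sym2 (V d)) → ¬ w ∈ (R2 : Sym2 (V d)) := by
        intro w hw hw2
        rw [hR1rep, Sym2.mem_iff] at hw
        rw [hR2rep, Sym2.mem_iff] at hw2
        rcases hw with rfl | rfl <;> rcases hw2 with h | h
        · exact hs1 h
        · exact hs2 h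
        · exact hs3 h
        · exact hs4 h
      have hx1 : x1 ∈ (R1 : Sym2 (V d)) ∨ x1 ∈ (R2 : Sym2 (V d)) := by
        apply or_of_chi_add
        rw [← synd_eq_two e' R1 R2 hRne hsR x1, congrFun hsynd x1]
        exact sx1
      rcases hx1 with hx1 | hx1
      · exact caseB_x1R1 hd hne' hne hRne hsupp hsR hsynd h1 h2 hadj1 hadj2
          dx1x2 dx1y2 dy1x2 dy1y2 hdisj hx1
      · exact caseB_x1R1 hd hne' hne hRne.symm hsupp
          (fun q => (hsR q).trans or_comm) hsynd h1 h2 hadj1 hadj2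
          dx1x2 dx1y2 dy1x2 dy1y2
          (fun w hw hw2 => hdisj w hw2 hw) hx1

/-- Classification: a degenerate weight-2 error admits a mirror symmetry that
fixes its syndrome and fixes an unsatisfied check. -/
lemma key_mirror (hd : 5 ≤ d) (e : (Toric d).edgeSet → ZMod 2)
    (hw : wt e = 2) (hdeg : Degenerate e) :
    ∃ (M : Mirror d) (a : V d), M.σ a = a ∧ (∀ v, synd e (M.σ v) = synd e v) ∧
      synd e a = 1 := by
  obtain ⟨Q1, Q2, hne, hsupp⟩ := support_two hd e hw
  obtain ⟨x1, y1, h1, hadj1⟩ := edge_rep Q1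
  obtain ⟨x2, y2, h2, hadj2⟩ := edge_rep Q2
  by_cases hshare : x1 = x2 ∨ x1 = y2 ∨ y1 = x2 ∨ y1 = y2
  · rcases hshare with heq | heq | heq | heq
    · exact caseA_core hd e hw hdeg hne hsupp x1 y1 y2 h1 (by rw [h2, ← heq])
    · exact caseA_core hd e hw hdeg hne hsupp x1 y1 x2 h1
        (by rw [h2, ← heq]; exact Sym2.eq_swap)
    · exact caseA_core hd e hw hdeg hne hsupp y1 x1 y2
        (by rw [h1]; exact Sym2.eq_swap) (by rw [h2, ← heq])
    · exact caseA_core hd e hw hdeg hne hsupp y1 x1 x2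
        (by rw [h1]; exact Sym2.eq_swap)
        (by rw [h2, ← heq]; exact Sym2.eq_swap)
  · push_neg at hshare
    obtain ⟨hs1, hs2, hs3, hs4⟩ := hshare
    exact caseB hd e hw hdeg hne hsupp x1 y1 x2 y2 h1 h2 hadj1 hadj2 hs1 hs2 hs3 hs4

end CaseB

/-- **Claim (weight-2 degenerate errors are undecodable by MS).** -/
theorem weight2_degenerate_undecodable (d : ℕ) (hd : 5 ≤ d)
    (e : (Toric d).edgeSet → ZMod 2) (hw : wt e = 2) (hdeg : Degenerate e) :
    ∀ i : ℕ, 1 ≤ i → synd (hatE d (synd e) i) ≠ synd e := by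
  intro i _
  obtain ⟨M, a, ha, hs, hsa⟩ := key_mirror hd e hw hdeg
  exact synd_hatE_ne hd M (synd e) hs a ha hsa i

end ToricMS
end
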